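/- arXiv:math/0306199 — 3 statements merged into one kernel-verified Lean document; each statement's English description precedes it below -/
import Mathlib

section
/- Let x ∈ G, y ∈ U_x, and s ∈ D a simple element. Then there exists a unique ≼-minimal element c_s(y) ∈ D satisfying s ≼ c_s(y) ≼ δ and y^{c_s(y)} ∈ U_x. -/
namespace GarsideFormal

variable (G : Type*) [Group G]

/-- An atom of the submonoid `M`: a nontrivial element admitting no nontrivial
factorization inside `M`. -/
def IsMAtom (M : Submonoid G) (a : G) : Prop :=
  a ∈ M ∧ a ≠ 1 ∧ ∀ b ∈ M, ∀ c ∈ M, a = b * c → b = 1 ∨ c = 1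

/-- A Garside monoid `M`, realized as a submonoid (positive cone) of its group of
fractions `G`, together with its Garside element `δ`, left gcd and left lcm
operations (extended to `G`), and the cycling operation `cyc`. -/
structure Garside where
  M : Submonoid G
  δ : G
  gcd : G → G → G
  lcm : G → G → G
  cyc : G → G
  δ_mem : δ ∈ M
  /-- `G` is the group of fractions of `M`. -/
  fractions : ∀ g : G, ∃ a ∈ M, ∃ b ∈ M, g = a⁻¹ * b
  /-- `M` is generated by its atoms. -/
  atoms_generate : Submonoid.closure {a : G | IsMAtom G M a} = M
  /-- Atomicity: bounded factorization lengths into atoms. -/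
  atomic_bound : ∀ a ∈ M, ∃ N : ℕ, ∀ L : List G,
      (∀ b ∈ L, IsMAtom G M b) → L.prod = a → L.length ≤ N
  /-- Left divisors of `δ` coincide with right divisors of `δ`. -/
  divs_eq : {x : G | x ∈ M ∧ x⁻¹ * δ ∈ M} = {x : G | x ∈ M ∧ δ * x⁻¹ ∈ M}
  divs_finite : Set.Finite {x : G | x ∈ M ∧ x⁻¹ * δ ∈ M}
  divs_generate : Submonoid.closure {x : G | x ∈ M ∧ x⁻¹ * δ ∈ M} = M
  gcd_dvd_left : ∀ a b : G, (gcd a b)⁻¹ * a ∈ M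
  gcd_dvd_right : ∀ a b : G, (gcd a b)⁻¹ * b ∈ M
  gcd_greatest : ∀ a b x : G, x⁻¹ * a ∈ M → x⁻¹ * b ∈ M → x⁻¹ * gcd a b ∈ M
  lcm_dvd_left : ∀ a b : G, a⁻¹ * lcm a b ∈ M
  lcm_dvd_right : ∀ a b : G, b⁻¹ * lcm a b ∈ M
  lcm_least : ∀ a b x : G, a⁻¹ * x ∈ M → b⁻¹ * x ∈ M → (lcm a b)⁻¹ * x ∈ M
  /-- Cycling: if `k = inf x` then `cyc x = x ^ (τ⁻ᵏ A₁)` where `A₁ = δ ∧ δ⁻ᵏ x`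
  is the first factor of the left normal form of `x` (when `len x = 0` this
  gcd is `1` and `cyc x = x`). -/
  cyc_spec : ∀ (x : G) (k : ℤ),
      ((δ ^ k)⁻¹ * x ∈ M ∧ ∀ j : ℤ, (δ ^ j)⁻¹ * x ∈ M → j ≤ k) →
      cyc x = (δ ^ k * gcd δ ((δ ^ k)⁻¹ * x) * (δ ^ k)⁻¹)⁻¹ * x *
              (δ ^ k * gcd δ ((δ ^ k)⁻¹ * x) * (δ ^ k)⁻¹)

variable {G}

namespace Garside

variable (S : Garside G)

/-- Left divisibility `a ≼ b`. -/
def dvd (a b : G) : Prop := a⁻¹ * b ∈ S.M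

/-- Simple elements: the (left) divisors of `δ` in `M`. -/
def Simple (a : G) : Prop := a ∈ S.M ∧ a⁻¹ * S.δ ∈ S.M

/-- `k` is the infimum of `x`: maximal with `δ^k ≼ x`. -/
def IsInf (x : G) (k : ℤ) : Prop :=
  (S.δ ^ k)⁻¹ * x ∈ S.M ∧ ∀ j : ℤ, (S.δ ^ j)⁻¹ * x ∈ S.M → j ≤ k

/-- `s` is the supremum of `x`: minimal with `x ≼ δ^s`. -/
def IsSup (x : G) (s : ℤ) : Prop :=
  x⁻¹ * S.δ ^ s ∈ S.M ∧ ∀ j : ℤ, x⁻¹ * S.δ ^ j ∈ S.M → s ≤ j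

/-- `y` lies in the super summit set of `x`: `y` is conjugate to `x`, with
maximal infimum and minimal supremum among all conjugates of `x`. -/
def InSS (x y : G) : Prop :=
  IsConj x y ∧
  (∃ k : ℤ, S.IsInf y k ∧ ∀ z : G, IsConj x z → ∀ k' : ℤ, S.IsInf z k' → k' ≤ k) ∧
  (∃ s : ℤ, S.IsSup y s ∧ ∀ z : G, IsConj x z → ∀ s' : ℤ, S.IsSup z s' → s ≤ s')

/-- `y` lies in the ultra summit set of `x`: it is in the super summit set and
periodic under cycling. -/
def InUS (x y : G) : Prop :=
  S.InSS x y ∧ ∃ n : ℕ, 0 < n ∧ S.cyc^[n] y = y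

/-- `τ^k(z) = δ⁻ᵏ z δᵏ`, where `τ : z ↦ δ⁻¹zδ`. -/
def tauPow (k : ℤ) (z : G) : G := (S.δ ^ k)⁻¹ * z * S.δ ^ k

end Garside

/-- The ordered product `A (i+1) * A (i+2) * ⋯ * A r`. -/
def prodSeg (A : ℕ → G) (i r : ℕ) : G :=
  ((List.range (r - i)).map (fun j => A (i + 1 + j))).prod

namespace Garside

variable (S : Garside G)

/-- `x` has left normal form `δ^k A₁ ⋯ A_r`: each `Aᵢ` is a nontrivial simple
element and `(Aᵢ⁻¹ δ) ∧ A_{i+1} = 1`. -/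
def IsNormalForm (x : G) (k : ℤ) (r : ℕ) (A : ℕ → G) : Prop :=
  x = S.δ ^ k * prodSeg A 0 r ∧
  (∀ i, 1 ≤ i → i ≤ r → S.Simple (A i) ∧ A i ≠ 1) ∧
  (∀ i, 1 ≤ i → i < r → S.gcd ((A i)⁻¹ * S.δ) (A (i + 1)) = 1)

/-- The sequence `u₀, …, u_r` of the transport construction for `(x, u)`,
where `x` has normal form `δ^k A₁ ⋯ A_r`:
`u₀ = τᵏ(u)`, `u_r = u`, and `uᵢ = (A_{i+1} ⋯ A_r u) ∧ δ·τ(Aᵢ⁻¹ u_{i-1})`. -/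
def IsTransportSeq (k : ℤ) (r : ℕ) (A : ℕ → G) (u : G) (useq : ℕ → G) : Prop :=
  useq 0 = S.tauPow k u ∧ useq r = u ∧
  ∀ i, 1 ≤ i → i ≤ r →
    useq i = S.gcd (prodSeg A i r * u) (S.δ * S.tauPow 1 ((A i)⁻¹ * useq (i - 1)))

/-- The transport `φ_x(u) = τ⁻ᵏ(u₁) = τ⁻ᵏ(A₁⁻¹ · τᵏ(u) · (δ ∧ δ⁻ᵏ(x^u)))`,
where `k = inf x` and `A₁ = δ ∧ δ⁻ᵏ x`. -/
def transp (k : ℤ) (x u : G) : G :=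
  S.δ ^ k *
    ((S.gcd S.δ ((S.δ ^ k)⁻¹ * x))⁻¹ * S.tauPow k u *
      S.gcd S.δ ((S.δ ^ k)⁻¹ * (u⁻¹ * x * u))) * (S.δ ^ k)⁻¹

end Garside
namespace Garside

variable {S : Garside G}

section Basics

lemma dvd_def {a b : G} : S.dvd a b ↔ a⁻¹ * b ∈ S.M := Iff.rfl

lemma dvd_refl (a : G) : S.dvd a a := by
  simp [Garside.dvd, S.M.one_mem]

lemma dvd_trans {a b c : G} (h1 : S.dvd a b) (h2 : S.dvd b c) : S.dvd a c := by
  have := S.M.mul_mem h1 h2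
  simpa [Garside.dvd, mul_assoc] using this

lemma eq_one_of_mul_eq_one {u v : G} (hu : u ∈ S.M) (hv : v ∈ S.M)
    (huv : u * v = 1) : u = 1 := by
  by_contra hne
  rw [← S.atoms_generate] at hu hv
  obtain ⟨Lu, hLu, hLup⟩ := Submonoid.exists_list_of_mem_closure hu
  obtain ⟨Lv, hLv, hLvp⟩ := Submonoid.exists_list_of_mem_closure hv
  obtain ⟨N, hN⟩ := S.atomic_bound u (by rw [← S.atoms_generate]; exact hu)
  have hvu : v * u = 1 := by
    have : v = u⁻¹ := eq_inv_of_mul_eq_one_right huv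
    simp [this]
  have hLune : Lu ≠ [] := by
    intro h; apply hne; rw [← hLup, h, List.prod_nil]
  set L : List G := Lu ++ (List.replicate (N + 1) (Lv ++ Lu)).flatten with hL
  have hatoms : ∀ b ∈ L, IsMAtom G S.M b := by
    intro b hb
    rcases List.mem_append.1 hb with h | h
    · exact hLu b h
    · obtain ⟨l, hl, hbl⟩ := List.mem_flatten.1 h
      rcases List.mem_append.1 ((List.eq_of_mem_replicate hl) ▸ hbl) with h' | h'
      · exact hLv b h'
      · exact hLu b h'
  have hprod : L.prod = u := by
    rw [hL, List.prod_append, List.prod_flatten]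
    have : ∀ l ∈ (List.replicate (N + 1) (Lv ++ Lu)).map List.prod, l = 1 := by
      intro l hl
      obtain ⟨l', hl', rfl⟩ := List.mem_map.1 hl
      rw [List.eq_of_mem_replicate hl', List.prod_append, hLvp, hLup, hvu]
    rw [List.prod_eq_one this, hLup, mul_one]
  have hlen := hN L hatoms hprod
  have : N + 1 ≤ L.length := by
    rw [hL]
    have h1 : 1 ≤ Lu.length := List.length_pos_iff.2 hLune
    have : (List.replicate (N + 1) (Lv ++ Lu)).flatten.length = (N+1) * (Lv ++ Lu).length := by
      simp [List.length_flatten]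
    calc N + 1 ≤ (N+1) * (Lv ++ Lu).length := by
          have : 1 ≤ (Lv ++ Lu).length := by
            simp only [List.length_append]; omega
          nlinarith
      _ ≤ Lu.length + (List.replicate (N + 1) (Lv ++ Lu)).flatten.length := by omega
      _ = L.length := by rw [List.length_append]
  omega

lemma eq_one_of_mem_of_inv_mem {u : G} (hu : u ∈ S.M) (hu' : u⁻¹ ∈ S.M) : u = 1 :=
  eq_one_of_mul_eq_one hu hu' (mul_inv_cancel u)

lemma dvd_antisymm {a b : G} (h1 : S.dvd a b) (h2 : S.dvd b a) : a = b := by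
  have : a⁻¹ * b = 1 := eq_one_of_mul_eq_one h1 h2 (by group)
  have := congrArg (a * ·) this
  simpa [mul_assoc] using this.symm

end Basics

end Garside
namespace Garside

variable {S : Garside G}

section GcdTau

lemma gcd_mem {a b : G} (ha : a ∈ S.M) (hb : b ∈ S.M) : S.gcd a b ∈ S.M := by
  have := S.gcd_greatest a b 1 (by simpa using ha) (by simpa using hb)
  simpa using this

lemma gcd_eq_of {a b g : G} (hga : S.dvd g a) (hgb : S.dvd g b)
    (hgr : ∀ w, S.dvd w a → S.dvd w b → S.dvd w g) : S.gcd a b = g :=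
  dvd_antisymm (hgr _ (S.gcd_dvd_left a b) (S.gcd_dvd_right a b))
    (S.gcd_greatest a b g hga hgb)

lemma gcd_mul_left (g a b : G) : S.gcd (g * a) (g * b) = g * S.gcd a b := by
  apply gcd_eq_of
  · show (g * S.gcd a b)⁻¹ * (g * a) ∈ S.M
    have h := S.gcd_dvd_left a b
    have : (g * S.gcd a b)⁻¹ * (g * a) = (S.gcd a b)⁻¹ * a := by group
    rw [this]; exact h
  · show (g * S.gcd a b)⁻¹ * (g * b) ∈ S.M
    have h := S.gcd_dvd_right a b
    have : (g * S.gcd a b)⁻¹ * (g * b) = (S.gcd a b)⁻¹ * b := by group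
    rw [this]; exact h
  · intro w hwa hwb
    have h1 : (g⁻¹ * w)⁻¹ * a ∈ S.M := by
      have : (g⁻¹ * w)⁻¹ * a = w⁻¹ * (g * a) := by group
      rw [this]; exact hwa
    have h2 : (g⁻¹ * w)⁻¹ * b ∈ S.M := by
      have : (g⁻¹ * w)⁻¹ * b = w⁻¹ * (g * b) := by group
      rw [this]; exact hwb
    have h3 := S.gcd_greatest a b (g⁻¹ * w) h1 h2
    show w⁻¹ * (g * S.gcd a b) ∈ S.M
    have : w⁻¹ * (g * S.gcd a b) = (g⁻¹ * w)⁻¹ * S.gcd a b := by group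
    rw [this]; exact h3

lemma conj_delta_mem {m : G} (hm : m ∈ S.M) : S.δ⁻¹ * m * S.δ ∈ S.M := by
  rw [← S.divs_generate] at hm
  induction hm using Submonoid.closure_induction with
  | mem z hz =>
    obtain ⟨hz1, hz2⟩ := hz
    have hmemr : (z⁻¹ * S.δ) ∈ {w : G | w ∈ S.M ∧ S.δ * w⁻¹ ∈ S.M} := by
      refine ⟨hz2, ?_⟩
      have : S.δ * (z⁻¹ * S.δ)⁻¹ = z := by group
      rw [this]; exact hz1
    rw [← S.divs_eq] at hmemr
    have h2 : (z⁻¹ * S.δ)⁻¹ * S.δ ∈ S.M := hmemr.2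
    have : S.δ⁻¹ * z * S.δ = (z⁻¹ * S.δ)⁻¹ * S.δ := by group
    rw [this]; exact h2
  | one => simpa using S.M.one_mem
  | mul a b _ _ ha hb =>
    have : S.δ⁻¹ * (a * b) * S.δ = (S.δ⁻¹ * a * S.δ) * (S.δ⁻¹ * b * S.δ) := by group
    rw [this]; exact S.M.mul_mem ha hb

lemma conj_delta_inv_mem {m : G} (hm : m ∈ S.M) : S.δ * m * S.δ⁻¹ ∈ S.M := by
  rw [← S.divs_generate] at hm
  induction hm using Submonoid.closure_induction with
  | mem z hz =>
    obtain ⟨hz1, hz2⟩ := hz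
    have hp : (S.δ * z⁻¹) ∈ {w : G | w ∈ S.M ∧ w⁻¹ * S.δ ∈ S.M} := by
      constructor
      · have hz' : z ∈ {w : G | w ∈ S.M ∧ w⁻¹ * S.δ ∈ S.M} := ⟨hz1, hz2⟩
        rw [S.divs_eq] at hz'
        exact hz'.2
      · have : (S.δ * z⁻¹)⁻¹ * S.δ = z := by group
        rw [this]; exact hz1
    rw [S.divs_eq] at hp
    have h2 : S.δ * (S.δ * z⁻¹)⁻¹ ∈ S.M := hp.2
    have : S.δ * z * S.δ⁻¹ = S.δ * (S.δ * z⁻¹)⁻¹ := by group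
    rw [this]; exact h2
  | one => simpa using S.M.one_mem
  | mul a b _ _ ha hb =>
    have : S.δ * (a * b) * S.δ⁻¹ = (S.δ * a * S.δ⁻¹) * (S.δ * b * S.δ⁻¹) := by group
    rw [this]; exact S.M.mul_mem ha hb

lemma npow_conj_mem (n : ℕ) {m : G} (hm : m ∈ S.M) :
    (S.δ ^ n)⁻¹ * m * S.δ ^ n ∈ S.M := by
  induction n with
  | zero => simpa using hm
  | succ n ih =>
    have : (S.δ ^ (n+1))⁻¹ * m * S.δ ^ (n+1)
        = S.δ⁻¹ * ((S.δ ^ n)⁻¹ * m * S.δ ^ n) * S.δ := by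
      rw [pow_succ]; group
    rw [this]; exact conj_delta_mem ih

lemma npow_conj_inv_mem (n : ℕ) : ∀ {m : G}, m ∈ S.M → S.δ ^ n * m * (S.δ ^ n)⁻¹ ∈ S.M := by
  induction n with
  | zero => intro m hm; simpa using hm
  | succ n ih =>
    intro m hm
    have : S.δ ^ (n+1) * m * (S.δ ^ (n+1))⁻¹
        = S.δ ^ n * (S.δ * m * S.δ⁻¹) * (S.δ ^ n)⁻¹ := by
      rw [pow_succ]; group
    rw [this]; exact ih (conj_delta_inv_mem hm)

lemma zpow_conj_mem (t : ℤ) {m : G} (hm : m ∈ S.M) :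
    (S.δ ^ t)⁻¹ * m * S.δ ^ t ∈ S.M := by
  cases t with
  | ofNat n =>
    have := npow_conj_mem (S := S) n hm
    simpa [zpow_natCast] using this
  | negSucc n =>
    have := npow_conj_inv_mem (S := S) (n+1) hm
    have heq : S.δ ^ (Int.negSucc n) = (S.δ ^ (n+1 : ℕ))⁻¹ := by
      rw [zpow_negSucc]
    rw [heq, inv_inv]
    exact this

lemma zpow_conj_inv_mem (t : ℤ) {m : G} (hm : m ∈ S.M) :
    S.δ ^ t * m * (S.δ ^ t)⁻¹ ∈ S.M := by
  have := zpow_conj_mem (S := S) (-t) hm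
  rwa [zpow_neg, inv_inv] at this

lemma tauPow_mem (t : ℤ) {m : G} (hm : m ∈ S.M) : S.tauPow t m ∈ S.M :=
  zpow_conj_mem t hm

end GcdTau

end Garside
namespace Garside

variable {S : Garside G}

section GcdMore

lemma dvd_gcd_iff {w a b : G} : S.dvd w (S.gcd a b) ↔ S.dvd w a ∧ S.dvd w b := by
  constructor
  · intro h
    exact ⟨dvd_trans h (S.gcd_dvd_left a b), dvd_trans h (S.gcd_dvd_right a b)⟩
  · rintro ⟨h1, h2⟩
    exact S.gcd_greatest a b w h1 h2

lemma gcd_gcd_comm (a b c d : G) :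
    S.gcd (S.gcd a b) (S.gcd c d) = S.gcd (S.gcd a c) (S.gcd b d) := by
  apply dvd_antisymm
  · rw [dvd_gcd_iff, dvd_gcd_iff, dvd_gcd_iff]
    have h := dvd_refl (S := S) (S.gcd (S.gcd a b) (S.gcd c d))
    rw [dvd_gcd_iff] at h
    obtain ⟨h1, h2⟩ := h
    rw [dvd_gcd_iff] at h1 h2
    exact ⟨⟨h1.1, h2.1⟩, h1.2, h2.2⟩
  · rw [dvd_gcd_iff, dvd_gcd_iff, dvd_gcd_iff]
    have h := dvd_refl (S := S) (S.gcd (S.gcd a c) (S.gcd b d))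
    rw [dvd_gcd_iff] at h
    obtain ⟨h1, h2⟩ := h
    rw [dvd_gcd_iff] at h1 h2
    exact ⟨⟨h1.1, h2.1⟩, h1.2, h2.2⟩

lemma gcd_conj_zpow (t : ℤ) (a b : G) :
    S.gcd ((S.δ ^ t)⁻¹ * a * S.δ ^ t) ((S.δ ^ t)⁻¹ * b * S.δ ^ t)
      = (S.δ ^ t)⁻¹ * S.gcd a b * S.δ ^ t := by
  apply gcd_eq_of
  · show ((S.δ ^ t)⁻¹ * S.gcd a b * S.δ ^ t)⁻¹ * ((S.δ ^ t)⁻¹ * a * S.δ ^ t) ∈ S.M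
    have h := zpow_conj_mem (S := S) t (S.gcd_dvd_left a b)
    have heq : ((S.δ ^ t)⁻¹ * S.gcd a b * S.δ ^ t)⁻¹ * ((S.δ ^ t)⁻¹ * a * S.δ ^ t)
        = (S.δ ^ t)⁻¹ * ((S.gcd a b)⁻¹ * a) * S.δ ^ t := by group
    rw [heq]; exact h
  · show ((S.δ ^ t)⁻¹ * S.gcd a b * S.δ ^ t)⁻¹ * ((S.δ ^ t)⁻¹ * b * S.δ ^ t) ∈ S.M
    have h := zpow_conj_mem (S := S) t (S.gcd_dvd_right a b)
    have heq : ((S.δ ^ t)⁻¹ * S.gcd a b * S.δ ^ t)⁻¹ * ((S.δ ^ t)⁻¹ * b * S.δ ^ t)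
        = (S.δ ^ t)⁻¹ * ((S.gcd a b)⁻¹ * b) * S.δ ^ t := by group
    rw [heq]; exact h
  · intro w hwa hwb
    have h1 : (S.δ ^ t * w * (S.δ ^ t)⁻¹)⁻¹ * a ∈ S.M := by
      have := zpow_conj_inv_mem (S := S) t hwa
      have heq : S.δ ^ t * (w⁻¹ * ((S.δ ^ t)⁻¹ * a * S.δ ^ t)) * (S.δ ^ t)⁻¹
          = (S.δ ^ t * w * (S.δ ^ t)⁻¹)⁻¹ * a := by group
      rw [← heq]; exact this
    have h2 : (S.δ ^ t * w * (S.δ ^ t)⁻¹)⁻¹ * b ∈ S.M := by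
      have := zpow_conj_inv_mem (S := S) t hwb
      have heq : S.δ ^ t * (w⁻¹ * ((S.δ ^ t)⁻¹ * b * S.δ ^ t)) * (S.δ ^ t)⁻¹
          = (S.δ ^ t * w * (S.δ ^ t)⁻¹)⁻¹ * b := by group
      rw [← heq]; exact this
    have h3 := S.gcd_greatest a b _ h1 h2
    show w⁻¹ * ((S.δ ^ t)⁻¹ * S.gcd a b * S.δ ^ t) ∈ S.M
    have := zpow_conj_mem (S := S) t h3
    have heq : (S.δ ^ t)⁻¹ * ((S.δ ^ t * w * (S.δ ^ t)⁻¹)⁻¹ * S.gcd a b) * S.δ ^ t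
        = w⁻¹ * ((S.δ ^ t)⁻¹ * S.gcd a b * S.δ ^ t) := by group
    rw [← heq]; exact this

lemma gcd_mul_zpow (t : ℤ) (a b : G) :
    S.gcd (a * S.δ ^ t) (b * S.δ ^ t) = S.gcd a b * S.δ ^ t := by
  apply gcd_eq_of
  · show (S.gcd a b * S.δ ^ t)⁻¹ * (a * S.δ ^ t) ∈ S.M
    have h := zpow_conj_mem (S := S) t (S.gcd_dvd_left a b)
    have heq : (S.gcd a b * S.δ ^ t)⁻¹ * (a * S.δ ^ t)
        = (S.δ ^ t)⁻¹ * ((S.gcd a b)⁻¹ * a) * S.δ ^ t := by group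
    rw [heq]; exact h
  · show (S.gcd a b * S.δ ^ t)⁻¹ * (b * S.δ ^ t) ∈ S.M
    have h := zpow_conj_mem (S := S) t (S.gcd_dvd_right a b)
    have heq : (S.gcd a b * S.δ ^ t)⁻¹ * (b * S.δ ^ t)
        = (S.δ ^ t)⁻¹ * ((S.gcd a b)⁻¹ * b) * S.δ ^ t := by group
    rw [heq]; exact h
  · intro w hwa hwb
    have h1 : (w * (S.δ ^ t)⁻¹)⁻¹ * a ∈ S.M := by
      have := zpow_conj_inv_mem (S := S) t hwa
      have heq : S.δ ^ t * (w⁻¹ * (a * S.δ ^ t)) * (S.δ ^ t)⁻¹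
          = (w * (S.δ ^ t)⁻¹)⁻¹ * a := by group
      rw [← heq]; exact this
    have h2 : (w * (S.δ ^ t)⁻¹)⁻¹ * b ∈ S.M := by
      have := zpow_conj_inv_mem (S := S) t hwb
      have heq : S.δ ^ t * (w⁻¹ * (b * S.δ ^ t)) * (S.δ ^ t)⁻¹
          = (w * (S.δ ^ t)⁻¹)⁻¹ * b := by group
      rw [← heq]; exact this
    have h3 := S.gcd_greatest a b _ h1 h2
    show w⁻¹ * (S.gcd a b * S.δ ^ t) ∈ S.M
    have heq : w⁻¹ * (S.gcd a b * S.δ ^ t)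
        = (S.δ ^ t)⁻¹ * ((w * (S.δ ^ t)⁻¹)⁻¹ * S.gcd a b) * S.δ ^ t := by group
    rw [heq]; exact zpow_conj_mem t h3

lemma delta_zpow_mem {t : ℤ} (ht : 0 ≤ t) : S.δ ^ t ∈ S.M := by
  lift t to ℕ using ht
  rw [zpow_natCast]
  exact pow_mem S.δ_mem t

lemma gcd_dvd_delta_compl {P : G} {m : ℤ} (hm : 1 ≤ m) (hPd : P⁻¹ * S.δ ^ m ∈ S.M) :
    P⁻¹ * (S.gcd S.δ P * S.δ ^ (m - 1)) ∈ S.M := by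
  have hsplit : S.δ * S.δ ^ (m - 1) = S.δ ^ m := by
    rw [← zpow_one_add]; norm_num
  have h1 : P⁻¹ * (S.δ * S.δ ^ (m - 1)) ∈ S.M := by rw [hsplit]; exact hPd
  have h2 : P⁻¹ * (P * S.δ ^ (m - 1)) ∈ S.M := by
    have : P⁻¹ * (P * S.δ ^ (m - 1)) = S.δ ^ (m - 1) := by group
    rw [this]; exact delta_zpow_mem (by omega)
  have := S.gcd_greatest (S.δ * S.δ ^ (m - 1)) (P * S.δ ^ (m - 1)) P h1 h2
  rwa [gcd_mul_zpow] at this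

end GcdMore

/-- The context for the main theorem: `δ` is nontrivial, and `k`, `s` are the
maximal infimum resp. minimal supremum over the conjugacy class of `x`. -/
def Ctx (S : Garside G) (x : G) (k s : ℤ) : Prop :=
  S.δ ≠ 1 ∧ (∀ z : G, IsConj x z → ∀ j : ℤ, S.IsInf z j → j ≤ k) ∧
    (∀ z : G, IsConj x z → ∀ j : ℤ, S.IsSup z j → s ≤ j)

/-- `z` is a conjugate of `x` with `δ^k ≼ z ≼ δ^s`. -/
def Good (S : Garside G) (x : G) (k s : ℤ) (z : G) : Prop :=
  IsConj x z ∧ (S.δ ^ k)⁻¹ * z ∈ S.M ∧ z⁻¹ * S.δ ^ s ∈ S.M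

section Inf

variable {x : G} {k s : ℤ}

lemma delta_zpow_nonneg (hδ : S.δ ≠ 1) {a : ℤ} (ha : S.δ ^ a ∈ S.M) : 0 ≤ a := by
  by_contra h
  push_neg at h
  have hna : (0:ℤ) ≤ -a := by omega
  have h1 : S.δ ^ (-a) ∈ S.M := delta_zpow_mem hna
  have h2 : S.δ ^ a = 1 := by
    apply eq_one_of_mul_eq_one ha h1
    rw [← zpow_add]; norm_num
  have h3 : S.δ ^ (-a) = 1 := by
    rw [← inv_eq_one, ← zpow_neg] at h2; simpa using h2
  have h4 : S.δ ^ (-a - 1) ∈ S.M := delta_zpow_mem (by omega)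
  have h5 : S.δ * S.δ ^ (-a - 1) = 1 := by
    rw [← zpow_one_add]
    have : 1 + (-a - 1) = -a := by ring
    rw [this, h3]
  exact hδ (eq_one_of_mul_eq_one S.δ_mem h4 h5)

lemma le_of_zpow_dvd (hδ : S.δ ≠ 1) {a b : ℤ} (h : (S.δ ^ a)⁻¹ * S.δ ^ b ∈ S.M) :
    a ≤ b := by
  have : (S.δ ^ a)⁻¹ * S.δ ^ b = S.δ ^ (b - a) := by
    rw [← zpow_neg, ← zpow_add]; ring_nf
  rw [this] at h
  have := delta_zpow_nonneg hδ h
  omega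

lemma good_isInf_isSup (hc : Ctx S x k s) {z : G} (hz : Good S x k s z) :
    S.IsInf z k ∧ S.IsSup z s := by
  obtain ⟨hδ, hk, hs⟩ := hc
  obtain ⟨hconj, hzk, hzs⟩ := hz
  have hbdd : ∀ j : ℤ, (S.δ ^ j)⁻¹ * z ∈ S.M → j ≤ s := by
    intro j hj
    apply le_of_zpow_dvd hδ
    have h := S.M.mul_mem hj hzs
    have heq : (S.δ ^ j)⁻¹ * z * (z⁻¹ * S.δ ^ s) = (S.δ ^ j)⁻¹ * S.δ ^ s := by group
    rwa [heq] at h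
  have hbdd' : ∀ j : ℤ, z⁻¹ * S.δ ^ j ∈ S.M → k ≤ j := by
    intro j hj
    apply le_of_zpow_dvd hδ
    have h := S.M.mul_mem hzk hj
    have heq : (S.δ ^ k)⁻¹ * z * (z⁻¹ * S.δ ^ j) = (S.δ ^ k)⁻¹ * S.δ ^ j := by group
    rwa [heq] at h
  obtain ⟨k0, hk0, hk0max⟩ := Int.exists_greatest_of_bdd ⟨s, hbdd⟩ ⟨k, hzk⟩
  obtain ⟨s0, hs0, hs0min⟩ := Int.exists_least_of_bdd ⟨k, hbdd'⟩ ⟨s, hzs⟩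
  have hik : S.IsInf z k0 := ⟨hk0, hk0max⟩
  have his : S.IsSup z s0 := ⟨hs0, hs0min⟩
  have h1 : k0 ≤ k := hk z hconj k0 hik
  have h2 : k ≤ k0 := hk0max k hzk
  have h3 : s ≤ s0 := hs z hconj s0 his
  have h4 : s0 ≤ s := hs0min s hzs
  have e1 : k0 = k := le_antisymm h1 h2
  have e2 : s0 = s := le_antisymm h4 h3
  rw [e1] at hik; rw [e2] at his
  exact ⟨hik, his⟩

lemma good_inSS (hc : Ctx S x k s) {z : G} (hz : Good S x k s z) : S.InSS x z := by
  obtain ⟨hik, his⟩ := good_isInf_isSup hc hz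
  exact ⟨hz.1, ⟨k, hik, hc.2.1⟩, ⟨s, his, hc.2.2⟩⟩

end Inf

end Garside
namespace Garside

variable {S : Garside G}

/-- The cycling conjugator at infimum `k`: `τ⁻ᵏ(δ ∧ δ⁻ᵏz)`. -/
def wc (S : Garside G) (k : ℤ) (z : G) : G :=
  S.δ ^ k * S.gcd S.δ ((S.δ ^ k)⁻¹ * z) * (S.δ ^ k)⁻¹

section Cyc

variable {x : G} {k s : ℤ}

lemma simple_gcd_delta {P : G} (hP : P ∈ S.M) : S.Simple (S.gcd S.δ P) :=
  ⟨gcd_mem S.δ_mem hP, S.gcd_dvd_left S.δ P⟩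

lemma simple_conj_zpow (t : ℤ) {a : G} (ha : S.Simple a) :
    S.Simple (S.δ ^ t * a * (S.δ ^ t)⁻¹) := by
  constructor
  · exact zpow_conj_inv_mem t ha.1
  · have h := zpow_conj_inv_mem (S := S) t ha.2
    have heq : S.δ ^ t * (a⁻¹ * S.δ) * (S.δ ^ t)⁻¹
        = (S.δ ^ t * a * (S.δ ^ t)⁻¹)⁻¹ * S.δ := by group
    rw [← heq]; exact h

lemma wc_mem {z : G} (hz : (S.δ ^ k)⁻¹ * z ∈ S.M) : S.wc k z ∈ S.M :=
  zpow_conj_inv_mem k (gcd_mem S.δ_mem hz)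

lemma cyc_eq (hc : Ctx S x k s) {z : G} (hz : Good S x k s z) :
    S.cyc z = (S.wc k z)⁻¹ * z * S.wc k z :=
  S.cyc_spec z k (good_isInf_isSup hc hz).1

lemma good_cyc (hc : Ctx S x k s) {z : G} (hz : Good S x k s z) :
    Good S x k s (S.cyc z) := by
  have hcyc := cyc_eq hc hz
  obtain ⟨hconj, hzk, hzs⟩ := hz
  set P : G := (S.δ ^ k)⁻¹ * z with hPdef
  set A : G := S.gcd S.δ P with hAdef
  have hAm : A ∈ S.M := gcd_mem S.δ_mem hzk
  have hAP : A⁻¹ * P ∈ S.M := S.gcd_dvd_right S.δ P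
  have hwz : S.wc k z = S.δ ^ k * A * (S.δ ^ k)⁻¹ := rfl
  refine ⟨?_, ?_, ?_⟩
  · refine IsConj.trans hconj ?_
    rw [isConj_iff]
    exact ⟨(S.wc k z)⁻¹, by rw [hcyc]; group⟩
  · rw [hcyc, hwz]
    have heq : (S.δ ^ k)⁻¹ * ((S.δ ^ k * A * (S.δ ^ k)⁻¹)⁻¹ * z * (S.δ ^ k * A * (S.δ ^ k)⁻¹))
        = (A⁻¹ * P) * (S.δ ^ k * A * (S.δ ^ k)⁻¹) := by
      rw [hPdef]; group
    rw [heq]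
    exact S.M.mul_mem hAP (zpow_conj_inv_mem k hAm)
  · set Q : G := A⁻¹ * P with hQdef
    have hcyc2 : S.cyc z = S.δ ^ k * Q * (S.δ ^ k * A * (S.δ ^ k)⁻¹) := by
      rw [hcyc, hwz, hQdef, hPdef]; group
    by_cases hm : k = s
    · -- trivial canonical length: z = δ^k and cyc z = z
      have hP1 : P = 1 := by
        apply eq_one_of_mem_of_inv_mem hzk
        have heq : P⁻¹ = z⁻¹ * S.δ ^ s := by rw [hPdef, hm]; group
        rw [heq]; exact hzs
      have hA1 : A = 1 := by
        apply eq_one_of_mem_of_inv_mem hAm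
        have h := S.gcd_dvd_right S.δ P
        rw [← hAdef, hP1] at h; simpa using h
      have hid : S.cyc z = z := by rw [hcyc, hwz, hA1]; group
      rw [hid]; exact hzs
    · have hks : k ≤ s := le_of_zpow_dvd hc.1 (by
        have h := S.M.mul_mem hzk hzs
        have heq : (S.δ ^ k)⁻¹ * z * (z⁻¹ * S.δ ^ s) = (S.δ ^ k)⁻¹ * S.δ ^ s := by group
        rwa [heq] at h)
      have hm1 : 1 ≤ s - k := by omega
      have hPs : P⁻¹ * S.δ ^ (s - k) ∈ S.M := by
        have heq : P⁻¹ * S.δ ^ (s - k) = z⁻¹ * S.δ ^ s := by rw [hPdef]; group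
        rw [heq]; exact hzs
      have hQs : Q⁻¹ * S.δ ^ (s - k - 1) ∈ S.M := by
        have h := gcd_dvd_delta_compl hm1 hPs
        have heq : P⁻¹ * (S.gcd S.δ P * S.δ ^ (s - k - 1)) = Q⁻¹ * S.δ ^ (s - k - 1) := by
          rw [hQdef, hAdef]; group
        rwa [heq] at h
      have hA' : S.Simple (S.δ ^ k * A * (S.δ ^ k)⁻¹) :=
        simple_conj_zpow k ⟨hAm, S.gcd_dvd_left S.δ P⟩
      have step1 : S.dvd (S.δ ^ k * Q * (S.δ ^ k * A * (S.δ ^ k)⁻¹)) (S.δ ^ k * Q * S.δ) := by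
        show _ ∈ S.M
        have heq : (S.δ ^ k * Q * (S.δ ^ k * A * (S.δ ^ k)⁻¹))⁻¹ * (S.δ ^ k * Q * S.δ)
            = (S.δ ^ k * A * (S.δ ^ k)⁻¹)⁻¹ * S.δ := by group
        rw [heq]; exact hA'.2
      have step2 : S.dvd (S.δ ^ k * Q * S.δ) (S.δ ^ s) := by
        show _ ∈ S.M
        have heq : (S.δ ^ k * Q * S.δ)⁻¹ * S.δ ^ s
            = S.δ⁻¹ * (Q⁻¹ * S.δ ^ (s - k - 1)) * S.δ := by group
        rw [heq]; exact conj_delta_mem hQs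
      have := dvd_trans step1 step2
      rw [hcyc2]; exact this

lemma cyc_conj_eq (hc : Ctx S x k s) {z : G} (hz : Good S x k s z) :
    ∃ w : G, S.cyc z = w⁻¹ * z * w := ⟨S.wc k z, cyc_eq hc hz⟩

end Cyc

end Garside
namespace Garside

variable {S : Garside G}

section Transport

variable {x : G} {k s : ℤ}

lemma gcd_conj_zpow' (t : ℤ) (a b : G) :
    S.gcd (S.δ ^ t * a * (S.δ ^ t)⁻¹) (S.δ ^ t * b * (S.δ ^ t)⁻¹)
      = S.δ ^ t * S.gcd a b * (S.δ ^ t)⁻¹ := by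
  have h := gcd_conj_zpow (S := S) (-t) a b
  rwa [zpow_neg, inv_inv] at h

lemma gcd_mul_delta (a b : G) : S.gcd (a * S.δ) (b * S.δ) = S.gcd a b * S.δ := by
  have h := gcd_mul_zpow (S := S) 1 a b
  rwa [zpow_one] at h

/-- The basic formula for the transport of `w` along the cycling of `z`. -/
lemma trans_formula (z w : G) :
    (S.wc k z)⁻¹ * w * S.wc k (w⁻¹ * z * w)
      = S.δ ^ k * ((S.gcd S.δ ((S.δ ^ k)⁻¹ * z))⁻¹ *
          S.gcd ((S.δ ^ k)⁻¹ * w * S.δ ^ k * S.δ) ((S.δ ^ k)⁻¹ * z * w)) * (S.δ ^ k)⁻¹ := by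
  have hB : S.gcd S.δ ((S.δ ^ k)⁻¹ * (w⁻¹ * z * w))
      = ((S.δ ^ k)⁻¹ * w * S.δ ^ k)⁻¹ *
        S.gcd ((S.δ ^ k)⁻¹ * w * S.δ ^ k * S.δ) ((S.δ ^ k)⁻¹ * z * w) := by
    have harg : (S.δ ^ k)⁻¹ * (w⁻¹ * z * w)
        = ((S.δ ^ k)⁻¹ * w * S.δ ^ k)⁻¹ * ((S.δ ^ k)⁻¹ * z * w) := by group
    have h := gcd_mul_left (S := S) (((S.δ ^ k)⁻¹ * w * S.δ ^ k)⁻¹)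
      ((S.δ ^ k)⁻¹ * w * S.δ ^ k * S.δ) ((S.δ ^ k)⁻¹ * z * w)
    rw [inv_mul_cancel_left] at h
    rw [harg, h]
  show (S.δ ^ k * S.gcd S.δ ((S.δ ^ k)⁻¹ * z) * (S.δ ^ k)⁻¹)⁻¹ * w *
      (S.δ ^ k * S.gcd S.δ ((S.δ ^ k)⁻¹ * (w⁻¹ * z * w)) * (S.δ ^ k)⁻¹) = _
  rw [hB]
  group

lemma trans_pos {z u : G} (hz : (S.δ ^ k)⁻¹ * z ∈ S.M) (hu : u ∈ S.M) :
    (S.wc k z)⁻¹ * u * S.wc k (u⁻¹ * z * u) ∈ S.M := by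
  rw [trans_formula]
  apply zpow_conj_inv_mem
  apply S.gcd_greatest
  · -- A ≼ τᵏ(u)·δ  since  A ≼ δ ≼ τᵏ(u)·δ
    have h1 : (S.gcd S.δ ((S.δ ^ k)⁻¹ * z))⁻¹ * S.δ ∈ S.M := S.gcd_dvd_left _ _
    have h2 : S.δ⁻¹ * ((S.δ ^ k)⁻¹ * u * S.δ ^ k * S.δ) ∈ S.M := by
      have h := conj_delta_mem (zpow_conj_mem (S := S) k hu)
      have heq : S.δ⁻¹ * ((S.δ ^ k)⁻¹ * u * S.δ ^ k) * S.δ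
          = S.δ⁻¹ * ((S.δ ^ k)⁻¹ * u * S.δ ^ k * S.δ) := by group
      rwa [heq] at h
    have h3 := S.M.mul_mem h1 h2
    have heq : (S.gcd S.δ ((S.δ ^ k)⁻¹ * z))⁻¹ * S.δ *
        (S.δ⁻¹ * ((S.δ ^ k)⁻¹ * u * S.δ ^ k * S.δ))
        = (S.gcd S.δ ((S.δ ^ k)⁻¹ * z))⁻¹ * ((S.δ ^ k)⁻¹ * u * S.δ ^ k * S.δ) := by group
    rwa [heq] at h3
  · -- A ≼ P·u
    have h1 : (S.gcd S.δ ((S.δ ^ k)⁻¹ * z))⁻¹ * ((S.δ ^ k)⁻¹ * z) ∈ S.M :=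
      S.gcd_dvd_right _ _
    have h2 := S.M.mul_mem h1 hu
    have heq : (S.gcd S.δ ((S.δ ^ k)⁻¹ * z))⁻¹ * ((S.δ ^ k)⁻¹ * z) * u
        = (S.gcd S.δ ((S.δ ^ k)⁻¹ * z))⁻¹ * ((S.δ ^ k)⁻¹ * z * u) := by group
    rwa [heq] at h2

lemma trans_delta (z : G) :
    (S.wc k z)⁻¹ * S.δ * S.wc k (S.δ⁻¹ * z * S.δ) = S.δ := by
  have h := gcd_conj_zpow (S := S) 1 S.δ ((S.δ ^ k)⁻¹ * z)
  rw [zpow_one, inv_mul_cancel, one_mul] at h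
  have harg : (S.δ ^ k)⁻¹ * (S.δ⁻¹ * z * S.δ) = S.δ⁻¹ * ((S.δ ^ k)⁻¹ * z) * S.δ := by
    group
  show (S.δ ^ k * S.gcd S.δ ((S.δ ^ k)⁻¹ * z) * (S.δ ^ k)⁻¹)⁻¹ * S.δ *
      (S.δ ^ k * S.gcd S.δ ((S.δ ^ k)⁻¹ * (S.δ⁻¹ * z * S.δ)) * (S.δ ^ k)⁻¹) = S.δ
  rw [harg, h]
  group

end Transport

end Garside
namespace Garside

variable {S : Garside G}

section TransGcd

variable {x : G} {k s : ℤ}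

lemma trans_gcd (z u v : G) :
    (S.wc k z)⁻¹ * S.gcd u v * S.wc k ((S.gcd u v)⁻¹ * z * S.gcd u v)
      = S.gcd ((S.wc k z)⁻¹ * u * S.wc k (u⁻¹ * z * u))
          ((S.wc k z)⁻¹ * v * S.wc k (v⁻¹ * z * v)) := by
  rw [trans_formula, trans_formula, trans_formula]
  rw [gcd_conj_zpow' (S := S) k]
  rw [gcd_mul_left (S := S) ((S.gcd S.δ ((S.δ ^ k)⁻¹ * z))⁻¹)]
  rw [gcd_gcd_comm]
  rw [gcd_mul_delta]
  rw [gcd_conj_zpow (S := S) k u v]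
  rw [gcd_mul_left (S := S) ((S.δ ^ k)⁻¹ * z) u v]

end TransGcd

end Garside
namespace Garside

/-- Accumulated cycling conjugator: `w(z)·w(cyc z)·⋯·w(cycⁱ⁻¹ z)`. -/
def Cprod (S : Garside G) (k : ℤ) (z : G) (i : ℕ) : G :=
  ((List.range i).map fun j => S.wc k (S.cyc^[j] z)).prod

/-- Iterated transport of the conjugator `u` along the cycling orbits of `y`
and of `u⁻¹yu`. -/
def gseq (S : Garside G) (k : ℤ) (y u : G) (i : ℕ) : G :=
  (Cprod S k y i)⁻¹ * u * Cprod S k (u⁻¹ * y * u) i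

variable {S : Garside G}

section Chain

variable {x : G} {k s : ℤ}

lemma Cprod_zero (z : G) : Cprod S k z 0 = 1 := by simp [Cprod]

lemma Cprod_succ (z : G) (i : ℕ) :
    Cprod S k z (i + 1) = Cprod S k z i * S.wc k (S.cyc^[i] z) := by
  simp [Cprod, List.range_succ]

lemma good_iter (hc : Ctx S x k s) {z : G} (hz : Good S x k s z) (i : ℕ) :
    Good S x k s (S.cyc^[i] z) := by
  induction i with
  | zero => simpa using hz
  | succ i ih =>
    rw [Function.iterate_succ_apply']
    exact good_cyc hc ih

lemma chain_eq (hc : Ctx S x k s) {z : G} (hz : Good S x k s z) (i : ℕ) :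
    S.cyc^[i] z = (Cprod S k z i)⁻¹ * z * Cprod S k z i := by
  induction i with
  | zero => simp [Cprod_zero]
  | succ i ih =>
    rw [Function.iterate_succ_apply', cyc_eq hc (good_iter hc hz i), Cprod_succ]
    set W := S.wc k (S.cyc^[i] z) with hW
    rw [ih]
    group

lemma iterate_fix {f : G → G} {z : G} {n : ℕ} (h : f^[n] z = z) (j : ℕ) :
    f^[j * n] z = z := by
  induction j with
  | zero => simp
  | succ j ih =>
    have : (j + 1) * n = j * n + n := by ring
    rw [this, Function.iterate_add_apply, h, ih]

lemma Cprod_add {z : G} {a : ℕ} (ha : S.cyc^[a] z = z) (t : ℕ) :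
    Cprod S k z (a + t) = Cprod S k z a * Cprod S k z t := by
  induction t with
  | zero => simp [Cprod_zero]
  | succ t ih =>
    have h1 : a + (t + 1) = (a + t) + 1 := rfl
    rw [h1, Cprod_succ, ih, Cprod_succ, mul_assoc]
    have h2 : S.cyc^[a + t] z = S.cyc^[t] z := by
      rw [add_comm, Function.iterate_add_apply, ha]
    rw [h2]

lemma Cprod_mul {z : G} {n : ℕ} (hzn : S.cyc^[n] z = z) (j : ℕ) :
    Cprod S k z (j * n) = (Cprod S k z n) ^ j := by
  induction j with
  | zero => simp [Cprod_zero]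
  | succ j ih =>
    have h1 : (j + 1) * n = j * n + n := by ring
    rw [h1, Cprod_add (iterate_fix hzn j), ih, pow_succ]

lemma gseq_zero (y u : G) : gseq S k y u 0 = u := by simp [gseq, Cprod_zero]

lemma gseq_conj (hc : Ctx S x k s) {y u : G} (hgy : Good S x k s y)
    (hgu : Good S x k s (u⁻¹ * y * u)) (i : ℕ) :
    S.cyc^[i] (u⁻¹ * y * u) = (gseq S k y u i)⁻¹ * S.cyc^[i] y * gseq S k y u i := by
  rw [chain_eq hc hgy i, chain_eq hc hgu i, gseq]
  group

lemma gseq_succ (hc : Ctx S x k s) {y u : G} (hgy : Good S x k s y)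
    (hgu : Good S x k s (u⁻¹ * y * u)) (i : ℕ) :
    gseq S k y u (i + 1) = (S.wc k (S.cyc^[i] y))⁻¹ * gseq S k y u i *
      S.wc k ((gseq S k y u i)⁻¹ * S.cyc^[i] y * gseq S k y u i) := by
  rw [← gseq_conj hc hgy hgu i]
  show _ = (S.wc k (S.cyc^[i] y))⁻¹ * gseq S k y u i * S.wc k (S.cyc^[i] (u⁻¹ * y * u))
  rw [gseq, gseq, Cprod_succ, Cprod_succ]
  group

lemma gseq_mem (hc : Ctx S x k s) {y u : G} (hgy : Good S x k s y) (hu : u ∈ S.M)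
    (hgu : Good S x k s (u⁻¹ * y * u)) (i : ℕ) : gseq S k y u i ∈ S.M := by
  induction i with
  | zero => rw [gseq_zero]; exact hu
  | succ i ih =>
    rw [gseq_succ hc hgy hgu]
    exact trans_pos (good_iter hc hgy i).2.1 ih

lemma gseq_dvd_delta (hc : Ctx S x k s) {y u : G} (hgy : Good S x k s y)
    (hud : u⁻¹ * S.δ ∈ S.M) (hgu : Good S x k s (u⁻¹ * y * u)) (i : ℕ) :
    (gseq S k y u i)⁻¹ * S.δ ∈ S.M := by
  induction i with
  | zero => rw [gseq_zero]; exact hud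
  | succ i ih =>
    rw [gseq_succ hc hgy hgu]
    set g := gseq S k y u i with hg
    have hgcd : S.gcd g S.δ = g :=
      gcd_eq_of (dvd_refl g) ih (fun w hw _ => hw)
    have h := trans_gcd (S := S) (k := k) (S.cyc^[i] y) g S.δ
    rw [hgcd, trans_delta] at h
    have h2 := S.gcd_dvd_right ((S.wc k (S.cyc^[i] y))⁻¹ * g *
      S.wc k (g⁻¹ * S.cyc^[i] y * g)) S.δ
    rw [← h] at h2
    exact h2

end Chain

end Garside
namespace Garside

variable {S : Garside G}

section Periodic

variable {x : G} {k s : ℤ}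

lemma gseq_periodic (hc : Ctx S x k s) {y u : G} {n : ℕ} (hn : 0 < n)
    (hgy : Good S x k s y) (hu : u ∈ S.M) (hud : u⁻¹ * S.δ ∈ S.M)
    (hgu : Good S x k s (u⁻¹ * y * u))
    (hyn : S.cyc^[n] y = y) (hun : S.cyc^[n] (u⁻¹ * y * u) = u⁻¹ * y * u) :
    ∃ p : ℕ, 0 < p ∧ ∀ l : ℕ, gseq S k y u (p * l * n) = u := by
  classical
  set C := Cprod S k y n with hC
  set D := Cprod S k (u⁻¹ * y * u) n with hD
  have hgs : ∀ i : ℕ, gseq S k y u (i * n) = (C ^ i)⁻¹ * u * D ^ i := by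
    intro i
    rw [gseq, Cprod_mul hyn, Cprod_mul hun]
  have hfin : Finite ({a : G | a ∈ S.M ∧ a⁻¹ * S.δ ∈ S.M} : Set G) :=
    S.divs_finite.to_subtype
  set F : ℕ → ({a : G | a ∈ S.M ∧ a⁻¹ * S.δ ∈ S.M} : Set G) := fun i =>
    ⟨gseq S k y u (i * n),
      gseq_mem hc hgy hu hgu (i * n), gseq_dvd_delta hc hgy hud hgu (i * n)⟩ with hF
  obtain ⟨i, j, hij, hFij⟩ := Finite.exists_ne_map_eq_of_infinite F
  have hval : gseq S k y u (i * n) = gseq S k y u (j * n) := by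
    have := congrArg Subtype.val hFij
    simpa [hF] using this
  -- from a coincidence, extract a genuine period for the transport
  have key : ∀ i j : ℕ, i < j → gseq S k y u (i * n) = gseq S k y u (j * n) →
      C ^ (j - i) * u = u * D ^ (j - i) := by
    intro i j hlt heq
    set p := j - i with hp
    have hji : j = i + p := by omega
    rw [hgs, hgs, hji, pow_add, pow_add] at heq
    set a : G := (C ^ i)⁻¹ * u * D ^ i with hadef
    have ha : a = (C ^ p)⁻¹ * a * D ^ p := by
      conv_lhs => rw [heq]
      rw [hadef]
      group
    have hb : C ^ p * a = a * D ^ p := by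
      conv_lhs => rw [ha]
      group
    have ha2 : C ^ i * a * (D ^ i)⁻¹ = u := by rw [hadef]; group
    have hDi : D ^ p * (D ^ i)⁻¹ = (D ^ i)⁻¹ * D ^ p :=
      (((Commute.refl D).pow_pow p i).inv_right).eq
    calc C ^ p * u = C ^ p * (C ^ i * a * (D ^ i)⁻¹) := by rw [ha2]
      _ = (C ^ p * C ^ i) * a * (D ^ i)⁻¹ := by simp only [mul_assoc]
      _ = (C ^ i * C ^ p) * a * (D ^ i)⁻¹ := by rw [pow_mul_comm]
      _ = C ^ i * (C ^ p * a) * (D ^ i)⁻¹ := by simp only [mul_assoc]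
      _ = C ^ i * (a * D ^ p) * (D ^ i)⁻¹ := by rw [hb]
      _ = C ^ i * a * (D ^ p * (D ^ i)⁻¹) := by simp only [mul_assoc]
      _ = C ^ i * a * ((D ^ i)⁻¹ * D ^ p) := by rw [hDi]
      _ = (C ^ i * a * (D ^ i)⁻¹) * D ^ p := by simp only [mul_assoc]
      _ = u * D ^ p := by rw [ha2]
  have hmain : ∃ p : ℕ, 0 < p ∧ C ^ p * u = u * D ^ p := by
    rcases lt_trichotomy i j with h | h | h
    · exact ⟨j - i, by omega, key i j h hval⟩
    · exact absurd h hij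
    · exact ⟨i - j, by omega, key j i h hval.symm⟩
  obtain ⟨p, hp, hcu⟩ := hmain
  refine ⟨p, hp, ?_⟩
  have hl : ∀ l : ℕ, C ^ (p * l) * u = u * D ^ (p * l) := by
    intro l
    induction l with
    | zero => simp
    | succ l ih =>
      have h1 : p * (l + 1) = p * l + p := by ring
      rw [h1, pow_add, pow_add]
      calc C ^ (p * l) * C ^ p * u = C ^ (p * l) * (C ^ p * u) := by
            simp only [mul_assoc]
        _ = C ^ (p * l) * (u * D ^ p) := by rw [hcu]
        _ = (C ^ (p * l) * u) * D ^ p := by simp only [mul_assoc]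
        _ = u * D ^ (p * l) * D ^ p := by rw [ih]
        _ = u * (D ^ (p * l) * D ^ p) := by simp only [mul_assoc]
  intro l
  have h2 := hgs (p * l)
  rw [show p * l * n = p * l * n from rfl] at h2
  rw [h2]
  calc (C ^ (p * l))⁻¹ * u * D ^ (p * l)
      = (C ^ (p * l))⁻¹ * (u * D ^ (p * l)) := by simp only [mul_assoc]
    _ = (C ^ (p * l))⁻¹ * (C ^ (p * l) * u) := by rw [hl]
    _ = u := by group

lemma good_tau (hc : Ctx S x k s) {z : G} (hz : Good S x k s z) :
    Good S x k s (S.δ⁻¹ * z * S.δ) := by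
  refine ⟨hz.1.trans (by rw [isConj_iff]; exact ⟨S.δ⁻¹, by group⟩), ?_, ?_⟩
  · have h := conj_delta_mem (S := S) hz.2.1
    have heq : S.δ⁻¹ * ((S.δ ^ k)⁻¹ * z) * S.δ = (S.δ ^ k)⁻¹ * (S.δ⁻¹ * z * S.δ) := by
      group
    rwa [heq] at h
  · have h := conj_delta_mem (S := S) hz.2.2
    have heq : S.δ⁻¹ * (z⁻¹ * S.δ ^ s) * S.δ = (S.δ⁻¹ * z * S.δ)⁻¹ * S.δ ^ s := by
      group
    rwa [heq] at h

lemma cyc_tau (hc : Ctx S x k s) {z : G} (hz : Good S x k s z) :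
    S.cyc (S.δ⁻¹ * z * S.δ) = S.δ⁻¹ * S.cyc z * S.δ := by
  rw [cyc_eq hc (good_tau hc hz), cyc_eq hc hz]
  have h := gcd_conj_zpow (S := S) 1 S.δ ((S.δ ^ k)⁻¹ * z)
  rw [zpow_one, inv_mul_cancel, one_mul] at h
  have harg : (S.δ ^ k)⁻¹ * (S.δ⁻¹ * z * S.δ) = S.δ⁻¹ * ((S.δ ^ k)⁻¹ * z) * S.δ := by
    group
  show (S.δ ^ k * S.gcd S.δ ((S.δ ^ k)⁻¹ * (S.δ⁻¹ * z * S.δ)) * (S.δ ^ k)⁻¹)⁻¹ *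
      (S.δ⁻¹ * z * S.δ) *
      (S.δ ^ k * S.gcd S.δ ((S.δ ^ k)⁻¹ * (S.δ⁻¹ * z * S.δ)) * (S.δ ^ k)⁻¹) = _
  rw [harg, h]
  show _ = S.δ⁻¹ * ((S.δ ^ k * S.gcd S.δ ((S.δ ^ k)⁻¹ * z) * (S.δ ^ k)⁻¹)⁻¹ * z *
      (S.δ ^ k * S.gcd S.δ ((S.δ ^ k)⁻¹ * z) * (S.δ ^ k)⁻¹)) * S.δ
  group

lemma tau_periodic (hc : Ctx S x k s) {y : G} (hgy : Good S x k s y) {n : ℕ}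
    (hyn : S.cyc^[n] y = y) : S.cyc^[n] (S.δ⁻¹ * y * S.δ) = S.δ⁻¹ * y * S.δ := by
  have hiter : ∀ i : ℕ, S.cyc^[i] (S.δ⁻¹ * y * S.δ) = S.δ⁻¹ * S.cyc^[i] y * S.δ := by
    intro i
    induction i with
    | zero => simp
    | succ i ih =>
      rw [Function.iterate_succ_apply', Function.iterate_succ_apply', ih,
        cyc_tau hc (good_iter hc hgy i)]
  rw [hiter, hyn]

end Periodic

end Garside
namespace Garside

variable {S : Garside G}

section Main

variable {x : G} {k s : ℤ}

/-- The Gebhardt convexity theorem: if `y`, `y^u`, `y^v` are all periodic under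
cycling (with common period `n`) and good, then so is `y^(u ∧ v)`. -/
theorem gcd_good_periodic (hc : Ctx S x k s) {y u v : G} {n : ℕ} (hn : 0 < n)
    (hgy : Good S x k s y) (hyn : S.cyc^[n] y = y)
    (hu : u ∈ S.M) (hud : u⁻¹ * S.δ ∈ S.M) (hgu : Good S x k s (u⁻¹ * y * u))
    (hun : S.cyc^[n] (u⁻¹ * y * u) = u⁻¹ * y * u)
    (hv : v ∈ S.M) (hvd : v⁻¹ * S.δ ∈ S.M) (hgv : Good S x k s (v⁻¹ * y * v))
    (hvn : S.cyc^[n] (v⁻¹ * y * v) = v⁻¹ * y * v) :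
    Good S x k s ((S.gcd u v)⁻¹ * y * S.gcd u v) ∧
      ∃ L : ℕ, 0 < L ∧
        S.cyc^[L] ((S.gcd u v)⁻¹ * y * S.gcd u v) = (S.gcd u v)⁻¹ * y * S.gcd u v := by
  have hgc : Good S x k s ((S.gcd u v)⁻¹ * y * S.gcd u v) := by
    refine ⟨hgy.1.trans (by rw [isConj_iff]; exact ⟨(S.gcd u v)⁻¹, by group⟩), ?_, ?_⟩
    · -- infimum is preserved for the gcd conjugate
      have h1 : (S.gcd u v * S.δ ^ k)⁻¹ * (u * S.δ ^ k) ∈ S.M := by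
        have h := zpow_conj_mem (S := S) k (S.gcd_dvd_left u v)
        have heq : (S.δ ^ k)⁻¹ * ((S.gcd u v)⁻¹ * u) * S.δ ^ k
            = (S.gcd u v * S.δ ^ k)⁻¹ * (u * S.δ ^ k) := by group
        rwa [heq] at h
      have h1' : (S.gcd u v * S.δ ^ k)⁻¹ * (v * S.δ ^ k) ∈ S.M := by
        have h := zpow_conj_mem (S := S) k (S.gcd_dvd_right u v)
        have heq : (S.δ ^ k)⁻¹ * ((S.gcd u v)⁻¹ * v) * S.δ ^ k
            = (S.gcd u v * S.δ ^ k)⁻¹ * (v * S.δ ^ k) := by group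
        rwa [heq] at h
      have h2 : (u * S.δ ^ k)⁻¹ * (y * u) ∈ S.M := by
        have heq : (u * S.δ ^ k)⁻¹ * (y * u) = (S.δ ^ k)⁻¹ * (u⁻¹ * y * u) := by group
        rw [heq]; exact hgu.2.1
      have h2' : (v * S.δ ^ k)⁻¹ * (y * v) ∈ S.M := by
        have heq : (v * S.δ ^ k)⁻¹ * (y * v) = (S.δ ^ k)⁻¹ * (v⁻¹ * y * v) := by group
        rw [heq]; exact hgv.2.1
      have h3 : (S.gcd u v * S.δ ^ k)⁻¹ * (y * u) ∈ S.M := dvd_trans h1 h2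
      have h3' : (S.gcd u v * S.δ ^ k)⁻¹ * (y * v) ∈ S.M := dvd_trans h1' h2'
      have h5 := S.gcd_greatest (y * u) (y * v) (S.gcd u v * S.δ ^ k) h3 h3'
      rw [gcd_mul_left] at h5
      have heq : (S.gcd u v * S.δ ^ k)⁻¹ * (y * S.gcd u v)
          = (S.δ ^ k)⁻¹ * ((S.gcd u v)⁻¹ * y * S.gcd u v) := by group
      rwa [heq] at h5
    · -- supremum is preserved for the gcd conjugate
      have h1 : (y * S.gcd u v)⁻¹ * (y * u) ∈ S.M := by
        have h := S.gcd_dvd_left (y * u) (y * v)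
        rwa [gcd_mul_left] at h
      have h1' : (y * S.gcd u v)⁻¹ * (y * v) ∈ S.M := by
        have h := S.gcd_dvd_right (y * u) (y * v)
        rwa [gcd_mul_left] at h
      have h2 : (y * u)⁻¹ * (u * S.δ ^ s) ∈ S.M := by
        have heq : (y * u)⁻¹ * (u * S.δ ^ s) = (u⁻¹ * y * u)⁻¹ * S.δ ^ s := by group
        rw [heq]; exact hgu.2.2
      have h2' : (y * v)⁻¹ * (v * S.δ ^ s) ∈ S.M := by
        have heq : (y * v)⁻¹ * (v * S.δ ^ s) = (v⁻¹ * y * v)⁻¹ * S.δ ^ s := by group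
        rw [heq]; exact hgv.2.2
      have h3 : (y * S.gcd u v)⁻¹ * (u * S.δ ^ s) ∈ S.M := dvd_trans h1 h2
      have h3' : (y * S.gcd u v)⁻¹ * (v * S.δ ^ s) ∈ S.M := dvd_trans h1' h2'
      have h5 := S.gcd_greatest (u * S.δ ^ s) (v * S.δ ^ s) (y * S.gcd u v) h3 h3'
      rw [gcd_mul_zpow] at h5
      have heq : (y * S.gcd u v)⁻¹ * (S.gcd u v * S.δ ^ s)
          = ((S.gcd u v)⁻¹ * y * S.gcd u v)⁻¹ * S.δ ^ s := by group
      rwa [heq] at h5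
  obtain ⟨p, hp, hpu⟩ := gseq_periodic hc hn hgy hu hud hgu hyn hun
  obtain ⟨q, hq, hqv⟩ := gseq_periodic hc hn hgy hv hvd hgv hyn hvn
  have hgseq_gcd : ∀ i, gseq S k y (S.gcd u v) i
      = S.gcd (gseq S k y u i) (gseq S k y v i) := by
    intro i
    induction i with
    | zero => rw [gseq_zero, gseq_zero, gseq_zero]
    | succ i ih =>
      rw [gseq_succ hc hgy hgc, ih, gseq_succ hc hgy hgu, gseq_succ hc hgy hgv]
      exact trans_gcd _ _ _
  refine ⟨hgc, p * q * n, by positivity, ?_⟩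
  have hgpq : gseq S k y (S.gcd u v) (p * q * n) = S.gcd u v := by
    rw [hgseq_gcd]
    have h1 : gseq S k y u (p * q * n) = u := hpu q
    have h2 : gseq S k y v (p * q * n) = v := by
      have h := hqv p
      rwa [show q * p * n = p * q * n by ring] at h
    rw [h1, h2]
  have hfinal := gseq_conj hc hgy hgc (p * q * n)
  rw [hgpq] at hfinal
  rw [hfinal, iterate_fix hyn (p * q)]

end Main

end Garside
namespace Garside

variable {S : Garside G}

lemma all_one (h1 : S.δ = 1) : ∀ g : G, g = 1 := by
  have hM : ∀ m ∈ S.M, m = 1 := by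
    intro m hm
    rw [← S.divs_generate] at hm
    induction hm using Submonoid.closure_induction with
    | mem z hz =>
      apply eq_one_of_mem_of_inv_mem hz.1
      have := hz.2
      rw [h1, mul_one] at this
      exact this
    | one => rfl
    | mul a b _ _ ha hb => rw [ha, hb, mul_one]
  intro g
  obtain ⟨a, ha, b, hb, rfl⟩ := S.fractions g
  rw [hM a ha, hM b hb]; simp

lemma foldr_gcd_prop {T : Set G} (hclose : ∀ a ∈ T, ∀ b ∈ T, S.gcd a b ∈ T)
    {z : G} (hz : z ∈ T) : ∀ l : List G, (∀ d ∈ l, d ∈ T) →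
      l.foldr S.gcd z ∈ T ∧ ∀ d ∈ l, (l.foldr S.gcd z)⁻¹ * d ∈ S.M := by
  intro l
  induction l with
  | nil => intro _; exact ⟨hz, by simp⟩
  | cons e l ih =>
    intro hmem
    have hl : ∀ d ∈ l, d ∈ T := fun d hd => hmem d (List.mem_cons_of_mem e hd)
    have he : e ∈ T := hmem e List.mem_cons_self
    obtain ⟨ihm, ihd⟩ := ih hl
    rw [List.foldr_cons]
    refine ⟨hclose e he _ ihm, ?_⟩
    intro d hd
    rcases List.mem_cons.1 hd with rfl | hd'
    · exact S.gcd_dvd_left _ _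
    · exact dvd_trans (S.gcd_dvd_right e (l.foldr S.gcd z)) (ihd d hd')

end Garside

/-- For `y ∈ U_x` and a simple element `s`, there is a unique `≼`-minimal
simple element `c` with `s ≼ c ≼ δ` and `y^c ∈ U_x`. -/
theorem exists_unique_minimal_simple {G : Type*} [Group G] (S : Garside G)
    (x y s : G) (hy : S.InUS x y) (hs : S.Simple s) :
    ∃! c : G, (S.Simple c ∧ s⁻¹ * c ∈ S.M ∧ S.InUS x (c⁻¹ * y * c)) ∧
      ∀ d : G, (S.Simple d ∧ s⁻¹ * d ∈ S.M ∧ S.InUS x (d⁻¹ * y * d)) →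
        c⁻¹ * d ∈ S.M := by
  classical
  by_cases hδ1 : S.δ = 1
  · -- degenerate case: the whole group is trivial
    have hall := Garside.all_one (S := S) hδ1
    have hmem : ∀ g : G, g ∈ S.M := fun g => by rw [hall g]; exact S.M.one_mem
    refine ⟨1, ⟨⟨⟨S.M.one_mem, by simpa using S.δ_mem⟩, hmem _, ?_⟩, fun d _ => hmem _⟩,
      fun c' _ => hall c'⟩
    rw [inv_one, one_mul, mul_one]
    exact hy
  · obtain ⟨⟨hconj, ⟨k, hik, hkmax⟩, ⟨ss, his, hssmin⟩⟩, n, hn, hyn⟩ := hy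
    have hc : Garside.Ctx S x k ss := ⟨hδ1, hkmax, hssmin⟩
    have hgy : Garside.Good S x k ss y := ⟨hconj, hik.1, his.1⟩
    have good_of_inUS : ∀ z : G, S.InUS x z → Garside.Good S x k ss z := by
      rintro z ⟨⟨hcz, ⟨k', hik', hkmax'⟩, ⟨s', his', hsmin'⟩⟩, -⟩
      have hkk : k' = k := le_antisymm (hkmax z hcz k' hik') (hkmax' y hconj k hik)
      have hss : s' = ss := le_antisymm (hsmin' y hconj ss his) (hssmin z hcz s' his')
      exact ⟨hcz, by rw [← hkk]; exact hik'.1, by rw [← hss]; exact his'.1⟩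
    set T : Set G := {d | S.Simple d ∧ s⁻¹ * d ∈ S.M ∧ S.InUS x (d⁻¹ * y * d)} with hT
    have hTgcd : ∀ a ∈ T, ∀ b ∈ T, S.gcd a b ∈ T := by
      rintro a ⟨hsa, hsda, hua⟩ b ⟨hsb, hsdb, hub⟩
      obtain ⟨-, n1, hn1, ha1⟩ := id hua
      obtain ⟨-, n2, hn2, hb1⟩ := id hub
      set N : ℕ := n * n1 * n2 with hN
      have hyN : S.cyc^[N] y = y := by
        rw [show N = (n1 * n2) * n by rw [hN]; ring]
        exact Garside.iterate_fix hyn _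
      have haN : S.cyc^[N] (a⁻¹ * y * a) = a⁻¹ * y * a := by
        rw [show N = (n2 * n) * n1 by rw [hN]; ring]
        exact Garside.iterate_fix ha1 _
      have hbN : S.cyc^[N] (b⁻¹ * y * b) = b⁻¹ * y * b := by
        rw [show N = (n1 * n) * n2 by rw [hN]; ring]
        exact Garside.iterate_fix hb1 _
      have hNpos : 0 < N := by rw [hN]; positivity
      obtain ⟨hgood, L, hL, hfix⟩ := Garside.gcd_good_periodic hc hNpos hgy hyN
        hsa.1 hsa.2 (good_of_inUS _ hua) haN hsb.1 hsb.2 (good_of_inUS _ hub) hbN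
      refine ⟨⟨Garside.gcd_mem hsa.1 hsb.1,
        Garside.dvd_trans (S.gcd_dvd_left a b) hsa.2⟩,
        S.gcd_greatest a b s hsda hsdb,
        ⟨Garside.good_inSS hc hgood, L, hL, hfix⟩⟩
    have hdelta_T : S.δ ∈ T := by
      refine ⟨⟨S.δ_mem, by simpa using S.M.one_mem⟩, hs.2, ?_⟩
      exact ⟨Garside.good_inSS hc (Garside.good_tau hc hgy), n, hn,
        Garside.tau_periodic hc hgy hyn⟩
    have hTfin : T.Finite := S.divs_finite.subset (fun d hd => ⟨hd.1.1, hd.1.2⟩)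
    set l : List G := hTfin.toFinset.toList with hl
    have hlT : ∀ d ∈ l, d ∈ T := by
      intro d hd
      rw [hl, Finset.mem_toList, Set.Finite.mem_toFinset] at hd
      exact hd
    obtain ⟨hcT, hcmin⟩ := Garside.foldr_gcd_prop hTgcd hdelta_T l hlT
    set c : G := l.foldr S.gcd S.δ with hcdef
    have hmin : ∀ d ∈ T, c⁻¹ * d ∈ S.M := by
      intro d hd
      apply hcmin
      rw [hl, Finset.mem_toList, Set.Finite.mem_toFinset]
      exact hd
    refine ⟨c, ⟨hcT, fun d hd => hmin d hd⟩, ?_⟩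
    rintro c' ⟨hc'T, hc'min⟩
    exact Garside.dvd_antisymm (hc'min c hcT) (hmin c' hc'T)

end GarsideFormal
end

section
/- Let x be an ultra summit element of nonzero canonical length with minimal cycling period N, and let s ∈ D. If c_s ≼ c_s^(iN) for some i > 0, then c_s^(iN) = c_s, where c_s is the ≼-minimal simple element with s ≼ c_s and x^{c_s} ∈ U_x, and c_s^(iN) denotes the iN-fold iterated transport of c_s. -/
namespace GarsideFormal

variable (G : Type*) [Group G]

variable {G}

section Aux

open Function

variable {G : Type*} [Group G]

theorem exists_atom_list (S : Garside G) {m : G} (hm : m ∈ S.M) :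
    ∃ L : List G, (∀ b ∈ L, IsMAtom G S.M b) ∧ L.prod = m := by
  rw [← S.atoms_generate] at hm
  induction hm using Submonoid.closure_induction with
  | mem a h => exact ⟨[a], by simpa using h, by simp⟩
  | one => exact ⟨[], by simp, by simp⟩
  | mul a b ha hb iha ihb =>
      obtain ⟨L1, h1, e1⟩ := iha
      obtain ⟨L2, h2, e2⟩ := ihb
      refine ⟨L1 ++ L2, ?_, by simp [e1, e2]⟩
      intro c hc
      rcases List.mem_append.1 hc with h | h
      exacts [h1 c h, h2 c h]

theorem unit_eq_one (S : Garside G) {c : G} (hc : c ∈ S.M) (hc' : c⁻¹ ∈ S.M) : c = 1 := by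
  by_contra hne
  obtain ⟨L1, hL1, e1⟩ := exists_atom_list S hc
  obtain ⟨L2, hL2, e2⟩ := exists_atom_list S hc'
  obtain ⟨N1, hN1⟩ := S.atomic_bound 1 S.M.one_mem
  have hL1ne : L1 ≠ [] := by rintro rfl; exact hne (by simpa using e1.symm)
  set K : List G := (List.replicate (N1+1) (L1 ++ L2)).flatten with hK
  have hKmem : ∀ b ∈ K, IsMAtom G S.M b := by
    intro b hb
    rw [hK, List.mem_flatten] at hb
    obtain ⟨l, hl, hbl⟩ := hb
    rw [List.mem_replicate] at hl
    rcases List.mem_append.1 (hl.2 ▸ hbl) with h | h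
    exacts [hL1 b h, hL2 b h]
  have hKprod : K.prod = 1 := by
    rw [hK, List.prod_flatten, List.map_replicate, List.prod_replicate, List.prod_append,
      e1, e2, mul_inv_cancel, one_pow]
  have hlenle := hN1 K hKmem hKprod
  have hKlen : K.length = (N1+1) * (L1.length + L2.length) := by
    simp [hK]
  have h1 : 1 ≤ L1.length := List.length_pos_iff.2 hL1ne
  have : N1 + 1 ≤ K.length := by
    rw [hKlen]
    calc N1 + 1 = (N1+1) * 1 := by ring
    _ ≤ (N1+1) * (L1.length + L2.length) := by
        exact Nat.mul_le_mul_left _ (by omega)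
  omega

theorem dvd_antisymm (S : Garside G) {a b : G} (h1 : a⁻¹ * b ∈ S.M) (h2 : b⁻¹ * a ∈ S.M) :
    a = b := by
  have h3 : (a⁻¹ * b)⁻¹ ∈ S.M := by rw [mul_inv_rev, inv_inv]; exact h2
  have h4 := unit_eq_one S h1 h3
  rwa [inv_mul_eq_one] at h4

theorem tau_div_mem (S : Garside G) {d : G} (hd : d ∈ S.M) (hd' : d⁻¹ * S.δ ∈ S.M) :
    S.δ⁻¹ * d * S.δ ∈ S.M := by
  have hu : d⁻¹ * S.δ ∈ {x : G | x ∈ S.M ∧ S.δ * x⁻¹ ∈ S.M} := by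
    refine ⟨hd', ?_⟩
    have e : S.δ * (d⁻¹ * S.δ)⁻¹ = d := by group
    rw [e]; exact hd
  rw [← S.divs_eq] at hu
  have e : S.δ⁻¹ * d * S.δ = (d⁻¹ * S.δ)⁻¹ * S.δ := by group
  rw [e]; exact hu.2

theorem tauinv_div_mem (S : Garside G) {d : G} (hd : d ∈ S.M) (hd' : d⁻¹ * S.δ ∈ S.M) :
    S.δ * d * S.δ⁻¹ ∈ S.M := by
  have hdR : d ∈ {x : G | x ∈ S.M ∧ S.δ * x⁻¹ ∈ S.M} := by
    rw [← S.divs_eq]; exact ⟨hd, hd'⟩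
  have hv : S.δ * d⁻¹ ∈ {x : G | x ∈ S.M ∧ x⁻¹ * S.δ ∈ S.M} := by
    refine ⟨hdR.2, ?_⟩
    have e : (S.δ * d⁻¹)⁻¹ * S.δ = d := by group
    rw [e]; exact hd
  rw [S.divs_eq] at hv
  have e : S.δ * d * S.δ⁻¹ = S.δ * (S.δ * d⁻¹)⁻¹ := by group
  rw [e]; exact hv.2

theorem tau_mem (S : Garside G) {g : G} (hg : g ∈ S.M) : S.δ⁻¹ * g * S.δ ∈ S.M := by
  rw [← S.divs_generate] at hg
  induction hg using Submonoid.closure_induction with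
  | mem a h => exact tau_div_mem S h.1 h.2
  | one => simpa using S.M.one_mem
  | mul a b ha hb iha ihb =>
      have e : S.δ⁻¹ * (a * b) * S.δ = (S.δ⁻¹ * a * S.δ) * (S.δ⁻¹ * b * S.δ) := by group
      rw [e]; exact S.M.mul_mem iha ihb

theorem tauinv_mem (S : Garside G) {g : G} (hg : g ∈ S.M) : S.δ * g * S.δ⁻¹ ∈ S.M := by
  rw [← S.divs_generate] at hg
  induction hg using Submonoid.closure_induction with
  | mem a h => exact tauinv_div_mem S h.1 h.2
  | one => simpa using S.M.one_mem
  | mul a b ha hb iha ihb =>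
      have e : S.δ * (a * b) * S.δ⁻¹ = (S.δ * a * S.δ⁻¹) * (S.δ * b * S.δ⁻¹) := by group
      rw [e]; exact S.M.mul_mem iha ihb

theorem tau_zpow_mem (S : Garside G) (j : ℤ) {g : G} (hg : g ∈ S.M) :
    (S.δ ^ j)⁻¹ * g * S.δ ^ j ∈ S.M := by
  induction j using Int.induction_on with
  | zero => simpa using hg
  | succ n ih =>
      have e : (S.δ ^ ((n : ℤ) + 1))⁻¹ * g * S.δ ^ ((n : ℤ) + 1)
          = S.δ⁻¹ * ((S.δ ^ (n : ℤ))⁻¹ * g * S.δ ^ (n : ℤ)) * S.δ := by group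
      rw [e]; exact tau_mem S ih
  | pred n ih =>
      have e : (S.δ ^ (-(n : ℤ) - 1))⁻¹ * g * S.δ ^ (-(n : ℤ) - 1)
          = S.δ * ((S.δ ^ (-(n : ℤ)))⁻¹ * g * S.δ ^ (-(n : ℤ))) * S.δ⁻¹ := by group
      rw [e]; exact tauinv_mem S ih

theorem gcd_mem (S : Garside G) {a b : G} (ha : a ∈ S.M) (hb : b ∈ S.M) :
    S.gcd a b ∈ S.M := by
  have := S.gcd_greatest a b 1 (by simpa using ha) (by simpa using hb)
  simpa using this

theorem zpow_nonneg_mem (S : Garside G) {j : ℤ} (hj : 0 ≤ j) : S.δ ^ j ∈ S.M := by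
  rw [← Int.toNat_of_nonneg hj, zpow_natCast]
  exact pow_mem S.δ_mem _


theorem gcd_tau (S : Garside G) (g : G) :
    S.gcd S.δ (S.δ⁻¹ * g * S.δ) = S.δ⁻¹ * S.gcd S.δ g * S.δ := by
  refine dvd_antisymm S ?_ ?_
  · -- (gcd δ (τ g))⁻¹ * (δ⁻¹ * gcd δ g * δ) ∈ M
    have h1 : (S.δ * S.gcd S.δ (S.δ⁻¹ * g * S.δ) * S.δ⁻¹)⁻¹ * S.δ ∈ S.M := by
      have h := tauinv_mem S (S.gcd_dvd_left S.δ (S.δ⁻¹ * g * S.δ))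
      have e : (S.δ * S.gcd S.δ (S.δ⁻¹ * g * S.δ) * S.δ⁻¹)⁻¹ * S.δ
          = S.δ * ((S.gcd S.δ (S.δ⁻¹ * g * S.δ))⁻¹ * S.δ) * S.δ⁻¹ := by group
      rw [e]; exact h
    have h2 : (S.δ * S.gcd S.δ (S.δ⁻¹ * g * S.δ) * S.δ⁻¹)⁻¹ * g ∈ S.M := by
      have h := tauinv_mem S (S.gcd_dvd_right S.δ (S.δ⁻¹ * g * S.δ))
      have e : (S.δ * S.gcd S.δ (S.δ⁻¹ * g * S.δ) * S.δ⁻¹)⁻¹ * g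
          = S.δ * ((S.gcd S.δ (S.δ⁻¹ * g * S.δ))⁻¹ * (S.δ⁻¹ * g * S.δ)) * S.δ⁻¹ := by group
      rw [e]; exact h
    have h3 := S.gcd_greatest S.δ g _ h1 h2
    have h4 := tau_mem S h3
    have e : (S.gcd S.δ (S.δ⁻¹ * g * S.δ))⁻¹ * (S.δ⁻¹ * S.gcd S.δ g * S.δ)
        = S.δ⁻¹ * ((S.δ * S.gcd S.δ (S.δ⁻¹ * g * S.δ) * S.δ⁻¹)⁻¹ * S.gcd S.δ g) * S.δ := by
      group
    rw [e]; exact h4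
  · refine S.gcd_greatest _ _ _ ?_ ?_
    · have h := tau_mem S (S.gcd_dvd_left S.δ g)
      have e : (S.δ⁻¹ * S.gcd S.δ g * S.δ)⁻¹ * S.δ
          = S.δ⁻¹ * ((S.gcd S.δ g)⁻¹ * S.δ) * S.δ := by group
      rw [e]; exact h
    · have h := tau_mem S (S.gcd_dvd_right S.δ g)
      have e : (S.δ⁻¹ * S.gcd S.δ g * S.δ)⁻¹ * (S.δ⁻¹ * g * S.δ)
          = S.δ⁻¹ * ((S.gcd S.δ g)⁻¹ * g) * S.δ := by group
      rw [e]; exact h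

/-- The conjugator appearing in cycling: `δ^k A δ^{-k}` with `A = δ ∧ δ^{-k} g`. -/
def pc (S : Garside G) (k : ℤ) (g : G) : G :=
  S.δ ^ k * S.gcd S.δ ((S.δ ^ k)⁻¹ * g) * (S.δ ^ k)⁻¹

/-- Algebraic cycling at infimum `k`. -/
def cycp (S : Garside G) (k : ℤ) (g : G) : G :=
  (pc S k g)⁻¹ * g * pc S k g

theorem transp_eq (S : Garside G) (k : ℤ) (y u : G) :
    S.transp k y u = (pc S k y)⁻¹ * u * pc S k (u⁻¹ * y * u) := by
  simp only [Garside.transp, Garside.tauPow, pc]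
  group

theorem cyc_eq_cycp (S : Garside G) {k : ℤ} {g : G} (h : S.IsInf g k) :
    S.cyc g = cycp S k g :=
  S.cyc_spec g k ⟨h.1, h.2⟩

theorem cycp_isConj (S : Garside G) (k : ℤ) (g : G) : IsConj g (cycp S k g) := by
  rw [isConj_iff]
  exact ⟨(pc S k g)⁻¹, by simp [cycp]⟩

theorem inf_cycp (S : Garside G) {k : ℤ} {g : G} (hg : (S.δ ^ k)⁻¹ * g ∈ S.M) :
    (S.δ ^ k)⁻¹ * cycp S k g ∈ S.M := by
  have h1 : (S.gcd S.δ ((S.δ ^ k)⁻¹ * g))⁻¹ * ((S.δ ^ k)⁻¹ * g) ∈ S.M :=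
    S.gcd_dvd_right _ _
  have h2 : (S.δ ^ (-k))⁻¹ * S.gcd S.δ ((S.δ ^ k)⁻¹ * g) * S.δ ^ (-k) ∈ S.M :=
    tau_zpow_mem S (-k) (gcd_mem S S.δ_mem hg)
  have e : (S.δ ^ k)⁻¹ * cycp S k g
      = ((S.gcd S.δ ((S.δ ^ k)⁻¹ * g))⁻¹ * ((S.δ ^ k)⁻¹ * g))
        * ((S.δ ^ (-k))⁻¹ * S.gcd S.δ ((S.δ ^ k)⁻¹ * g) * S.δ ^ (-k)) := by
    simp only [cycp, pc]; group
  rw [e]; exact S.M.mul_mem h1 h2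

theorem transp_one (S : Garside G) (k : ℤ) (y : G) : S.transp k y 1 = 1 := by
  rw [transp_eq]
  have e : (1 : G)⁻¹ * y * 1 = y := by group
  rw [e]; group

theorem transp_delta (S : Garside G) (k : ℤ) (y : G) : S.transp k y S.δ = S.δ := by
  rw [transp_eq]
  have e1 : (S.δ)⁻¹ * y * S.δ = S.δ⁻¹ * y * S.δ := rfl
  have e2 : (S.δ ^ k)⁻¹ * (S.δ⁻¹ * y * S.δ) = S.δ⁻¹ * ((S.δ ^ k)⁻¹ * y) * S.δ := by group
  simp only [pc, e2, gcd_tau]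
  group

theorem mono (S : Garside G) (k : ℤ) (y u v : G)
    (h1 : u⁻¹ * v ∈ S.M)
    (h2 : (S.δ ^ k)⁻¹ * (v⁻¹ * y * v) ∈ S.M) :
    (S.transp k y u)⁻¹ * S.transp k y v ∈ S.M := by
  set z : G := (S.δ ^ k)⁻¹ * (u⁻¹ * y * u) with hz
  set m : G := (S.δ ^ k)⁻¹ * (v⁻¹ * y * v) with hm
  set a : G := S.gcd S.δ z with ha
  set w' : G := (S.δ ^ k)⁻¹ * (u⁻¹ * v) * S.δ ^ k with hw'
  have hw'M : w' ∈ S.M := tau_zpow_mem S k h1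
  have hwm : w' * m = z * (u⁻¹ * v) := by rw [hz, hm, hw']; group
  set L : G := S.lcm w' a with hL
  set b : G := w'⁻¹ * L with hb
  have key1 : a⁻¹ * (w' * b) ∈ S.M := by
    have h := S.lcm_dvd_right w' a
    have e : a⁻¹ * (w' * b) = a⁻¹ * L := by rw [hb]; group
    rw [e]; exact h
  have hbδ : b⁻¹ * S.δ ∈ S.M := by
    have c1 : w'⁻¹ * (w' * S.δ) ∈ S.M := by
      have e : w'⁻¹ * (w' * S.δ) = S.δ := by group
      rw [e]; exact S.δ_mem
    have c2 : a⁻¹ * (w' * S.δ) ∈ S.M := by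
      have t : S.δ⁻¹ * w' * S.δ ∈ S.M := tau_mem S hw'M
      have e : a⁻¹ * (w' * S.δ) = (a⁻¹ * S.δ) * (S.δ⁻¹ * w' * S.δ) := by group
      rw [e]; exact S.M.mul_mem (S.gcd_dvd_left S.δ z) t
    have h := S.lcm_least w' a (w' * S.δ) c1 c2
    have e : b⁻¹ * S.δ = L⁻¹ * (w' * S.δ) := by rw [hb]; group
    rw [e]; exact h
  have hbm : b⁻¹ * m ∈ S.M := by
    have c1 : w'⁻¹ * (z * (u⁻¹ * v)) ∈ S.M := by
      rw [← hwm]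
      have e : w'⁻¹ * (w' * m) = m := by group
      rw [e]; exact h2
    have c2 : a⁻¹ * (z * (u⁻¹ * v)) ∈ S.M := by
      have e : a⁻¹ * (z * (u⁻¹ * v)) = (a⁻¹ * z) * (u⁻¹ * v) := by group
      rw [e]; exact S.M.mul_mem (S.gcd_dvd_right S.δ z) h1
    have h := S.lcm_least w' a (z * (u⁻¹ * v)) c1 c2
    have e : b⁻¹ * m = L⁻¹ * (w' * m) := by rw [hb]; group
    rw [e, hwm]; exact h
  have key2 : b⁻¹ * S.gcd S.δ m ∈ S.M := S.gcd_greatest S.δ m b hbδ hbm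
  have hE : a⁻¹ * w' * S.gcd S.δ m ∈ S.M := by
    have e : a⁻¹ * w' * S.gcd S.δ m = (a⁻¹ * (w' * b)) * (b⁻¹ * S.gcd S.δ m) := by
      rw [hb]; group
    rw [e]; exact S.M.mul_mem key1 key2
  have efin : (S.transp k y u)⁻¹ * S.transp k y v
      = (S.δ ^ (-k))⁻¹ * (a⁻¹ * w' * S.gcd S.δ m) * S.δ ^ (-k) := by
    simp only [Garside.transp, Garside.tauPow, hz, hm, ha, hw']
    group
  rw [efin]; exact tau_zpow_mem S (-k) hE

theorem delta_pow_bound (S : Garside G) (hδ : S.δ ≠ 1) {m : G} (hm : m ∈ S.M) :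
    ∃ Nb : ℕ, ∀ t : ℕ, (S.δ ^ t)⁻¹ * m ∈ S.M → t ≤ Nb := by
  obtain ⟨Nb, hNb⟩ := S.atomic_bound m hm
  refine ⟨Nb, fun t ht => ?_⟩
  obtain ⟨Lδ, hLδ, eδ⟩ := exists_atom_list S S.δ_mem
  obtain ⟨Lm, hLm, em⟩ := exists_atom_list S ht
  have hLδne : Lδ ≠ [] := by rintro rfl; exact hδ (by simpa using eδ.symm)
  set K : List G := (List.replicate t Lδ).flatten ++ Lm with hK
  have hKmem : ∀ b ∈ K, IsMAtom G S.M b := by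
    intro b hb
    rcases List.mem_append.1 hb with h | h
    · rw [List.mem_flatten] at h
      obtain ⟨l, hl, hbl⟩ := h
      rw [List.mem_replicate] at hl
      exact hLδ b (hl.2 ▸ hbl)
    · exact hLm b h
  have hKprod : K.prod = m := by
    rw [hK, List.prod_append, List.prod_flatten, List.map_replicate,
      List.prod_replicate, eδ, em]
    group
  have hle := hNb K hKmem hKprod
  have h1 : 1 ≤ Lδ.length := List.length_pos_iff.2 hLδne
  have hKlen : K.length = t * Lδ.length + Lm.length := by simp [hK]
  have : t ≤ K.length := by
    rw [hKlen]
    calc t = t * 1 := by ring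
    _ ≤ t * Lδ.length + Lm.length := by
        have := Nat.mul_le_mul_left t h1; omega
  omega

theorem iterate_cancel_of_periodic {α : Type*} {f : α → α} {z : α} {p : ℕ}
    (hp : 0 < p) (hz : f^[p] z = z) {a b : ℕ}
    (h : f^[a+1] z = f^[b+1] z) : f^[a] z = f^[b] z := by
  have e1 : f^[a + p] z = f^[a] z := by
    rw [Function.iterate_add_apply, hz]
  have e2 : a + p = (p - 1) + (a + 1) := by omega
  have e3 : (p - 1) + (b + 1) = b + p := by omega
  calc f^[a] z = f^[a + p] z := e1.symm
  _ = f^[p-1] (f^[a+1] z) := by rw [e2]; exact Function.iterate_add_apply f (p-1) (a+1) z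
  _ = f^[p-1] (f^[b+1] z) := by rw [h]
  _ = f^[b + p] z := by rw [← e3]; exact (Function.iterate_add_apply f (p-1) (b+1) z).symm
  _ = f^[b] z := by rw [Function.iterate_add_apply, hz]

end Aux

/-- No proper prefix: if `c_s ≼ c_s^(iN)` for some `i > 0`, then
`c_s^(iN) = c_s`, where `c_s` is the `≼`-minimal simple element with
`s ≼ c_s` and `x^{c_s} ∈ U_x`. -/
theorem iterated_transport_no_proper_prefix {G : Type*} [Group G] (S : Garside G)
    (x s cs : G) (k : ℤ)
    (hx : S.InUS x x)
    (hlen : ∃ kk ss : ℤ, S.IsInf x kk ∧ S.IsSup x ss ∧ kk < ss)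
    (hk : S.IsInf x k)
    (N : ℕ)
    (hN : 0 < N ∧ S.cyc^[N] x = x ∧ ∀ N' : ℕ, 0 < N' → S.cyc^[N'] x = x → N ≤ N')
    (hs : S.Simple s)
    (hcs : S.Simple cs ∧ s⁻¹ * cs ∈ S.M ∧ S.InUS x (cs⁻¹ * x * cs) ∧
      ∀ d : G, S.Simple d → s⁻¹ * d ∈ S.M → S.InUS x (d⁻¹ * x * d) → cs⁻¹ * d ∈ S.M)
    (csit : ℕ → G) (h0 : csit 0 = cs)
    (hrec : ∀ i : ℕ, csit (i + 1) = S.transp k (S.cyc^[i] x) (csit i))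
    (i : ℕ) (hi : 0 < i) (hdvd : cs⁻¹ * csit (i * N) ∈ S.M) :
    csit (i * N) = cs := by
  obtain ⟨hcs1, hcs2, hcs3, hcs4⟩ := hcs
  obtain ⟨hz0SS, n₀, hn₀pos, hn₀per⟩ := hcs3
  obtain ⟨hz0conj, ⟨k₀, hk₀, hk₀max⟩, -⟩ := hz0SS
  obtain ⟨⟨-, ⟨kx, hkx, hkxmax⟩, -⟩, -⟩ := hx
  have hδ1 : S.δ ≠ 1 := by
    intro h
    have hx1 : x ∈ S.M := by have h1 := hk.1; rw [h] at h1; simpa using h1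
    have h2 := hk.2 (k+1) (by rw [h]; simpa using hx1)
    omega
  have hkxk : kx = k := le_antisymm (hk.2 kx hkx.1) (hkx.2 k hk.1)
  have hkk : ∀ z : G, IsConj x z → ∀ j : ℤ, (S.δ ^ j)⁻¹ * z ∈ S.M → j ≤ k := by
    intro z hzc j hj
    obtain ⟨Nb, hNb⟩ := delta_pow_bound S hδ1 hj
    have hbdd : ∀ j' : ℤ, (S.δ ^ j')⁻¹ * z ∈ S.M → j' ≤ j + Nb := by
      intro j' hj'
      rcases le_or_gt j' j with h | h
      · omega
      · have htn : (((j' - j).toNat : ℤ)) = j' - j := Int.toNat_of_nonneg (by omega)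
        have e : (S.δ ^ ((j' - j).toNat))⁻¹ * ((S.δ ^ j)⁻¹ * z) = (S.δ ^ j')⁻¹ * z := by
          rw [← zpow_natCast S.δ, htn]; group
        have := hNb _ (by rw [e]; exact hj')
        omega
    obtain ⟨jm, hjm, hjmax⟩ := Int.exists_greatest_of_bdd
      (P := fun j' => (S.δ ^ j')⁻¹ * z ∈ S.M) ⟨j + Nb, hbdd⟩ ⟨j, hj⟩
    have hinfz : S.IsInf z jm := ⟨hjm, hjmax⟩
    have h1 := hkxmax z hzc jm hinfz
    have hjle := hjmax j hj
    omega
  have hz0inf : S.IsInf (cs⁻¹ * x * cs) k := by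
    constructor
    · have hk0k : k ≤ k₀ := hk₀max x (IsConj.refl x) k hk
      have e : (S.δ ^ k)⁻¹ * (cs⁻¹ * x * cs)
          = S.δ ^ (k₀ - k) * ((S.δ ^ k₀)⁻¹ * (cs⁻¹ * x * cs)) := by group
      rw [e]
      exact S.M.mul_mem (zpow_nonneg_mem S (by omega)) hk₀.1
    · exact fun j hj => hkk _ hz0conj j hj
  have horb : ∀ w : G, IsConj x w → S.IsInf w k → ∀ j : ℕ,
      IsConj x ((cycp S k)^[j] w) ∧ S.IsInf ((cycp S k)^[j] w) k ∧
        S.cyc^[j] w = (cycp S k)^[j] w := by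
    intro w hw hwinf j
    induction j with
    | zero => exact ⟨hw, hwinf, rfl⟩
    | succ n ih =>
      obtain ⟨ihc, ihinf, iheq⟩ := ih
      have e1 : (cycp S k)^[n+1] w = cycp S k ((cycp S k)^[n] w) :=
        Function.iterate_succ_apply' _ _ _
      have hconj : IsConj x ((cycp S k)^[n+1] w) := by
        rw [e1]; exact ihc.trans (cycp_isConj S k _)
      have hinf : S.IsInf ((cycp S k)^[n+1] w) k := by
        constructor
        · rw [e1]; exact inf_cycp S ihinf.1
        · exact fun j hj => hkk _ hconj j hj
      refine ⟨hconj, hinf, ?_⟩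
      rw [Function.iterate_succ_apply', iheq, e1, cyc_eq_cycp S ihinf]
  have hYfact := horb x (IsConj.refl x) hk
  have hZfact := horb (cs⁻¹ * x * cs) hz0conj hz0inf
  have hz0per : (cycp S k)^[n₀] (cs⁻¹ * x * cs) = cs⁻¹ * x * cs := by
    rw [← (hZfact n₀).2.2]; exact hn₀per
  have hrecY : ∀ n : ℕ, csit (n+1) = S.transp k ((cycp S k)^[n] x) (csit n) := by
    intro n; rw [hrec n, (hYfact n).2.2]
  have hmain : ∀ n : ℕ,
      (csit n)⁻¹ * ((cycp S k)^[n] x) * csit n = (cycp S k)^[n] (cs⁻¹ * x * cs) ∧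
      csit n ∈ S.M ∧ (csit n)⁻¹ * S.δ ∈ S.M := by
    intro n
    induction n with
    | zero =>
      rw [h0]
      exact ⟨rfl, hcs1.1, hcs1.2⟩
    | succ n ih =>
      obtain ⟨ihz, ihM, ihδ⟩ := ih
      have hYinf := (hYfact n).2.1
      have hZinf := (hZfact n).2.1
      have hmemcond : (S.δ ^ k)⁻¹ * ((csit n)⁻¹ * ((cycp S k)^[n] x) * csit n) ∈ S.M := by
        rw [ihz]; exact hZinf.1
      have hmem : csit (n+1) ∈ S.M := by
        have hmono := mono S k ((cycp S k)^[n] x) 1 (csit n) (by simpa using ihM) hmemcond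
        rw [transp_one] at hmono
        rw [hrecY n]; simpa using hmono
      have hdivcond : (S.δ ^ k)⁻¹ * (S.δ⁻¹ * ((cycp S k)^[n] x) * S.δ) ∈ S.M := by
        have h := tau_mem S hYinf.1
        have e : S.δ⁻¹ * ((S.δ ^ k)⁻¹ * ((cycp S k)^[n] x)) * S.δ
            = (S.δ ^ k)⁻¹ * (S.δ⁻¹ * ((cycp S k)^[n] x) * S.δ) := by group
        rw [← e]; exact h
      have hdiv : (csit (n+1))⁻¹ * S.δ ∈ S.M := by
        have hmono := mono S k ((cycp S k)^[n] x) (csit n) S.δ ihδ hdivcond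
        rw [transp_delta] at hmono
        rw [hrecY n]; exact hmono
      have hznew : (csit (n+1))⁻¹ * ((cycp S k)^[n+1] x) * csit (n+1)
          = (cycp S k)^[n+1] (cs⁻¹ * x * cs) := by
        rw [hrecY n, transp_eq, Function.iterate_succ_apply',
          Function.iterate_succ_apply', ← ihz]
        simp only [cycp]
        group
      exact ⟨hznew, hmem, hdiv⟩
  have hYN : ∀ n : ℕ, (cycp S k)^[n + N] x = (cycp S k)^[n] x := by
    intro n
    rw [Function.iterate_add_apply, ← (hYfact N).2.2, hN.2.1]
  have hYper : ∀ c n : ℕ, (cycp S k)^[n + c * N] x = (cycp S k)^[n] x := by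
    intro c
    induction c with
    | zero => simp
    | succ c ih =>
      intro n
      have e : n + (c+1) * N = (n + c * N) + N := by ring
      rw [e, hYN, ih]
  have hchain : ∀ n : ℕ, (csit n)⁻¹ * csit (n + i * N) ∈ S.M := by
    intro n
    induction n with
    | zero => simpa [h0] using hdvd
    | succ n ih =>
      have e1 : n + 1 + i * N = (n + i * N) + 1 := by ring
      have e2 : csit ((n + i*N) + 1) = S.transp k ((cycp S k)^[n] x) (csit (n + i*N)) := by
        rw [hrecY (n + i*N), hYper i n]
      have hcond : (S.δ ^ k)⁻¹ * ((csit (n+i*N))⁻¹ * ((cycp S k)^[n] x) * csit (n+i*N)) ∈ S.M := by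
        rw [← hYper i n, (hmain (n+i*N)).1]
        exact (hZfact (n+i*N)).2.1.1
      have hstep := mono S k ((cycp S k)^[n] x) (csit n) (csit (n+i*N)) ih hcond
      rw [e1, hrecY n, e2]
      exact hstep
  have hfinset : ∃ a b : ℕ, a < b ∧ csit (a * (i*N)) = csit (b * (i*N)) := by
    haveI := S.divs_finite.to_subtype
    obtain ⟨j₁, j₂, hne, heq⟩ := Finite.exists_ne_map_eq_of_infinite
      (fun j : ℕ => (⟨csit (j * (i*N)), (hmain _).2.1, (hmain _).2.2⟩ :
        {g : G | g ∈ S.M ∧ g⁻¹ * S.δ ∈ S.M}))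
    have heq' : csit (j₁ * (i*N)) = csit (j₂ * (i*N)) := congrArg Subtype.val heq
    rcases lt_or_gt_of_ne hne with h | h
    · exact ⟨j₁, j₂, h, heq'⟩
    · exact ⟨j₂, j₁, h, heq'.symm⟩
  obtain ⟨a, b, hab, heqab⟩ := hfinset
  set T : ℕ := (b - a) * (i * N) with hT
  have hTsplit : b * (i*N) = a * (i*N) + T := by
    rw [hT, ← Nat.add_mul]
    congr 1
    omega
  have hTN : ∀ n : ℕ, (cycp S k)^[n + T] x = (cycp S k)^[n] x := by
    intro n
    rw [show n + T = n + ((b-a)*i)*N by rw [hT]; ring]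
    exact hYper _ n
  have hdesc : ∀ m : ℕ, csit (m+1) = csit ((m+1) + T) → csit m = csit (m + T) := by
    intro m hm1
    have hYT : (cycp S k)^[m + T] x = (cycp S k)^[m] x := hTN m
    have hrmT : csit ((m + T) + 1) = S.transp k ((cycp S k)^[m] x) (csit (m + T)) := by
      rw [hrecY (m + T), hYT]
    rw [show (m+1) + T = (m+T) + 1 by ring] at hm1
    have heqt : S.transp k ((cycp S k)^[m] x) (csit m)
        = S.transp k ((cycp S k)^[m] x) (csit (m + T)) := by
      rw [← hrecY m, ← hrmT]; exact hm1
    rw [transp_eq, transp_eq] at heqt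
    have h1 : csit m * pc S k ((csit m)⁻¹ * ((cycp S k)^[m] x) * csit m)
        = csit (m+T) * pc S k ((csit (m+T))⁻¹ * ((cycp S k)^[m] x) * csit (m+T)) := by
      have e1 : csit m * pc S k ((csit m)⁻¹ * ((cycp S k)^[m] x) * csit m)
          = pc S k ((cycp S k)^[m] x) *
            ((pc S k ((cycp S k)^[m] x))⁻¹ * csit m *
              pc S k ((csit m)⁻¹ * ((cycp S k)^[m] x) * csit m)) := by group
      rw [e1, heqt]; group
    have hZm := (hmain m).1
    have hZmT : (csit (m+T))⁻¹ * ((cycp S k)^[m] x) * csit (m+T)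
        = (cycp S k)^[m+T] (cs⁻¹ * x * cs) := by
      rw [← hYT]; exact (hmain (m+T)).1
    rw [hZm, hZmT] at h1
    have h2 : cycp S k ((cycp S k)^[m] (cs⁻¹ * x * cs))
        = cycp S k ((cycp S k)^[m+T] (cs⁻¹ * x * cs)) := by
      have eL : cycp S k ((cycp S k)^[m] (cs⁻¹ * x * cs))
          = (csit m * pc S k ((cycp S k)^[m] (cs⁻¹ * x * cs)))⁻¹ *
            ((cycp S k)^[m] x) *
            (csit m * pc S k ((cycp S k)^[m] (cs⁻¹ * x * cs))) := by
        simp only [cycp]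
        rw [← hZm]
        group
      have eR : cycp S k ((cycp S k)^[m+T] (cs⁻¹ * x * cs))
          = (csit (m+T) * pc S k ((cycp S k)^[m+T] (cs⁻¹ * x * cs)))⁻¹ *
            ((cycp S k)^[m] x) *
            (csit (m+T) * pc S k ((cycp S k)^[m+T] (cs⁻¹ * x * cs))) := by
        simp only [cycp]
        rw [← hZmT]
        group
      rw [eL, eR, h1]
    have h3 : (cycp S k)^[m+1] (cs⁻¹ * x * cs) = (cycp S k)^[(m+T)+1] (cs⁻¹ * x * cs) := by
      rw [Function.iterate_succ_apply', Function.iterate_succ_apply']; exact h2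
    have h4 : (cycp S k)^[m] (cs⁻¹ * x * cs) = (cycp S k)^[m+T] (cs⁻¹ * x * cs) :=
      iterate_cancel_of_periodic hn₀pos hz0per h3
    rw [← h4] at h1
    exact mul_right_cancel h1
  have hstart : csit (a * (i*N)) = csit (a * (i*N) + T) := by
    rw [← hTsplit]; exact heqab
  have hdown : ∀ d : ℕ, d ≤ a * (i*N) → csit (a*(i*N) - d) = csit ((a*(i*N) - d) + T) := by
    intro d
    induction d with
    | zero => intro _; simpa using hstart
    | succ d ihd =>
      intro hle
      have h1 := ihd (by omega)
      rw [show a*(i*N) - d = (a*(i*N) - (d+1)) + 1 by omega] at h1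
      exact hdesc _ h1
  have h00 : cs = csit T := by
    have := hdown (a*(i*N)) le_rfl
    simpa [h0] using this
  have hchain2 : ∀ c : ℕ, (csit (i*N))⁻¹ * csit (i*N + c * (i*N)) ∈ S.M := by
    intro c
    induction c with
    | zero => simpa using S.M.one_mem
    | succ c ih =>
      have hstep := hchain (i*N + c*(i*N))
      have e2 : (csit (i*N))⁻¹ * csit (i*N + (c+1)*(i*N))
          = ((csit (i*N))⁻¹ * csit (i*N + c*(i*N))) *
            ((csit (i*N + c*(i*N)))⁻¹ * csit ((i*N + c*(i*N)) + i*N)) := by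
        rw [show i*N + (c+1)*(i*N) = (i*N + c*(i*N)) + i*N by ring]
        group
      rw [e2]; exact S.M.mul_mem ih hstep
  have hba1 : T = i*N + (b - a - 1) * (i*N) := by
    rw [hT, show b - a = (b - a - 1) + 1 by omega, Nat.add_mul, one_mul]
    exact Nat.add_comm _ _
  have hfinal : (csit (i*N))⁻¹ * cs ∈ S.M := by
    have h := hchain2 (b - a - 1)
    rw [← hba1, ← h00] at h
    exact h
  exact dvd_antisymm S hfinal hdvd

end GarsideFormal
end

section
/- (Pullback formula) Let s ∈ D, let y ∈ U_x have normal form δ^k B₁⋯B_r with r ≥ 1, and define b₀ = 1 ∨ τ^{-k}(B₁)sδ⁻¹, b₁ = τ^k(s), b_i = 1 ∨ B_i⁻¹b_{i-1} for i = 2,…,r, and b = b₀ ∨ b_r. Then b is a simple element, and the ≼-minimal element ρ_b ∈ D with b ≼ ρ_b and y^{ρ_b} ∈ S_x equals the pullback π_y(s): the ≼-minimal element p ∈ D with y^p ∈ S_x and s ≼ φ_y(p). -/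
namespace GarsideFormal

variable (G : Type*) [Group G]

variable {G}

-- ===================== helpers =====================

variable {S : Garside G}

lemma gs_units_eq_one (u : G) (hu : u ∈ S.M) (hui : u⁻¹ ∈ S.M) : u = 1 := by
  by_contra hne
  obtain ⟨N, hN⟩ := S.atomic_bound u hu
  have hl : ∀ v, v ∈ S.M → ∃ l : List G, (∀ y ∈ l, IsMAtom G S.M y) ∧ l.prod = v := by
    intro v hv
    have hv' : v ∈ Submonoid.closure {a : G | IsMAtom G S.M a} := by
      rw [S.atoms_generate]; exact hv
    exact Submonoid.exists_list_of_mem_closure hv'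
  obtain ⟨L, hL, hLp⟩ := hl u hu
  obtain ⟨L', hL', hLp'⟩ := hl u⁻¹ hui
  have hLne : L ≠ [] := by
    rintro rfl
    simp only [List.prod_nil] at hLp
    exact hne hLp.symm
  have key : ∀ m : ℕ, ∃ l : List G,
      (∀ y ∈ l, IsMAtom G S.M y) ∧ l.prod = u ∧ m ≤ l.length := by
    intro m
    induction m with
    | zero => exact ⟨L, hL, hLp, Nat.zero_le _⟩
    | succ n ih =>
      obtain ⟨l, h1, h2, h3⟩ := ih
      refine ⟨l ++ (L' ++ L), ?_, ?_, ?_⟩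
      · intro y hy
        rcases List.mem_append.1 hy with h | h
        · exact h1 y h
        · rcases List.mem_append.1 h with h | h
          · exact hL' y h
          · exact hL y h
      · simp [List.prod_append, h2, hLp, hLp']
      · have hL1 : 1 ≤ L.length := List.length_pos_iff.2 hLne
        simp only [List.length_append]
        omega
  obtain ⟨l, h1, h2, h3⟩ := key (N + 1)
  have := hN l h1 h2
  omega

lemma gs_dvd_trans {a b c : G} (h1 : a⁻¹ * b ∈ S.M) (h2 : b⁻¹ * c ∈ S.M) :
    a⁻¹ * c ∈ S.M := by
  have h := mul_mem h1 h2
  have e : a⁻¹ * b * (b⁻¹ * c) = a⁻¹ * c := by group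
  rwa [e] at h

lemma gs_dvd_antisymm {a b : G} (h1 : a⁻¹ * b ∈ S.M) (h2 : b⁻¹ * a ∈ S.M) : a = b := by
  have h : a⁻¹ * b = 1 := by
    refine gs_units_eq_one _ h1 ?_
    have e : (a⁻¹ * b)⁻¹ = b⁻¹ * a := by group
    rwa [e]
  have h2 : b = a := by
    have := congrArg (a * ·) h
    simpa [mul_assoc] using this
  exact h2.symm

lemma gs_le_gcd_iff {a b x : G} :
    x⁻¹ * S.gcd a b ∈ S.M ↔ x⁻¹ * a ∈ S.M ∧ x⁻¹ * b ∈ S.M :=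
  ⟨fun h => ⟨gs_dvd_trans h (S.gcd_dvd_left a b), gs_dvd_trans h (S.gcd_dvd_right a b)⟩,
   fun h => S.gcd_greatest a b x h.1 h.2⟩

lemma gs_lcm_le_iff {a b x : G} :
    (S.lcm a b)⁻¹ * x ∈ S.M ↔ a⁻¹ * x ∈ S.M ∧ b⁻¹ * x ∈ S.M :=
  ⟨fun h => ⟨gs_dvd_trans (S.lcm_dvd_left a b) h, gs_dvd_trans (S.lcm_dvd_right a b) h⟩,
   fun h => S.lcm_least a b x h.1 h.2⟩

lemma gs_gcd_eq {g a b : G} (h1 : g⁻¹ * a ∈ S.M) (h2 : g⁻¹ * b ∈ S.M)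
    (h3 : ∀ x, x⁻¹ * a ∈ S.M → x⁻¹ * b ∈ S.M → x⁻¹ * g ∈ S.M) : S.gcd a b = g :=
  gs_dvd_antisymm (h3 _ (S.gcd_dvd_left a b) (S.gcd_dvd_right a b))
    (S.gcd_greatest a b g h1 h2)

lemma gs_gcd_mem {a b : G} (ha : a ∈ S.M) (hb : b ∈ S.M) : S.gcd a b ∈ S.M := by
  have := S.gcd_greatest a b 1 (by simpa) (by simpa)
  simpa using this

lemma gs_gcd_mul_left (c a b : G) : S.gcd (c * a) (c * b) = c * S.gcd a b := by
  refine gs_gcd_eq ?_ ?_ ?_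
  · have e : (c * S.gcd a b)⁻¹ * (c * a) = (S.gcd a b)⁻¹ * a := by group
    rw [e]; exact S.gcd_dvd_left a b
  · have e : (c * S.gcd a b)⁻¹ * (c * b) = (S.gcd a b)⁻¹ * b := by group
    rw [e]; exact S.gcd_dvd_right a b
  · intro x hx1 hx2
    have h1 : (c⁻¹ * x)⁻¹ * a ∈ S.M := by
      have e : (c⁻¹ * x)⁻¹ * a = x⁻¹ * (c * a) := by group
      rw [e]; exact hx1
    have h2 : (c⁻¹ * x)⁻¹ * b ∈ S.M := by
      have e : (c⁻¹ * x)⁻¹ * b = x⁻¹ * (c * b) := by group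
      rw [e]; exact hx2
    have := S.gcd_greatest a b _ h1 h2
    have e : (c⁻¹ * x)⁻¹ * S.gcd a b = x⁻¹ * (c * S.gcd a b) := by group
    rwa [e] at this

lemma gs_tau_mem {m : G} (hm : m ∈ S.M) : S.δ⁻¹ * m * S.δ ∈ S.M := by
  rw [← S.divs_generate] at hm
  induction hm using Submonoid.closure_induction with
  | mem s hs =>
    obtain ⟨hs1, hs2⟩ := hs
    have hu : (s⁻¹ * S.δ) ∈ {x : G | x ∈ S.M ∧ S.δ * x⁻¹ ∈ S.M} := by
      refine ⟨hs2, ?_⟩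
      have e : S.δ * (s⁻¹ * S.δ)⁻¹ = s := by group
      rw [e]; exact hs1
    rw [← S.divs_eq] at hu
    have e : S.δ⁻¹ * s * S.δ = (s⁻¹ * S.δ)⁻¹ * S.δ := by group
    rw [e]; exact hu.2
  | one => simpa using S.M.one_mem
  | mul a b _ _ iha ihb =>
    have e : S.δ⁻¹ * (a * b) * S.δ = (S.δ⁻¹ * a * S.δ) * (S.δ⁻¹ * b * S.δ) := by group
    rw [e]; exact mul_mem iha ihb

lemma gs_tau_inv_mem {m : G} (hm : m ∈ S.M) : S.δ * m * S.δ⁻¹ ∈ S.M := by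
  rw [← S.divs_generate] at hm
  induction hm using Submonoid.closure_induction with
  | mem s hs =>
    obtain ⟨hs1, hs2⟩ := hs
    have hs' : s ∈ {x : G | x ∈ S.M ∧ S.δ * x⁻¹ ∈ S.M} := by
      rw [← S.divs_eq]; exact ⟨hs1, hs2⟩
    have ht : (S.δ * s⁻¹) ∈ {x : G | x ∈ S.M ∧ x⁻¹ * S.δ ∈ S.M} := by
      refine ⟨hs'.2, ?_⟩
      have e : (S.δ * s⁻¹)⁻¹ * S.δ = s := by group
      rw [e]; exact hs1
    rw [S.divs_eq] at ht
    have e : S.δ * s * S.δ⁻¹ = S.δ * (S.δ * s⁻¹)⁻¹ := by group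
    rw [e]; exact ht.2
  | one => simpa using S.M.one_mem
  | mul a b _ _ iha ihb =>
    have e : S.δ * (a * b) * S.δ⁻¹ = (S.δ * a * S.δ⁻¹) * (S.δ * b * S.δ⁻¹) := by group
    rw [e]; exact mul_mem iha ihb

lemma gs_conj_zpow_mem (k : ℤ) {m : G} (hm : m ∈ S.M) :
    (S.δ ^ k)⁻¹ * m * S.δ ^ k ∈ S.M := by
  induction k using Int.induction_on with
  | zero => simpa using hm
  | succ n ih =>
    have e : (S.δ ^ ((n : ℤ) + 1))⁻¹ * m * S.δ ^ ((n : ℤ) + 1)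
        = S.δ⁻¹ * ((S.δ ^ (n : ℤ))⁻¹ * m * S.δ ^ (n : ℤ)) * S.δ := by group
    rw [e]; exact gs_tau_mem ih
  | pred n ih =>
    have e : (S.δ ^ (-(n : ℤ) - 1))⁻¹ * m * S.δ ^ (-(n : ℤ) - 1)
        = S.δ * ((S.δ ^ (-(n : ℤ)))⁻¹ * m * S.δ ^ (-(n : ℤ))) * S.δ⁻¹ := by group
    rw [e]; exact gs_tau_inv_mem ih

lemma gs_conj_zpow_mem_iff (k : ℤ) (m : G) :
    (S.δ ^ k)⁻¹ * m * S.δ ^ k ∈ S.M ↔ m ∈ S.M := by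
  constructor
  · intro h
    have h2 := gs_conj_zpow_mem (S := S) (-k) h
    have e : (S.δ ^ (-k))⁻¹ * ((S.δ ^ k)⁻¹ * m * S.δ ^ k) * S.δ ^ (-k) = m := by group
    rwa [e] at h2
  · exact gs_conj_zpow_mem k

lemma gs_simple_conj_zpow (k : ℤ) {s : G} (hs : S.Simple s) :
    S.Simple ((S.δ ^ k)⁻¹ * s * S.δ ^ k) := by
  refine ⟨gs_conj_zpow_mem k hs.1, ?_⟩
  have e : ((S.δ ^ k)⁻¹ * s * S.δ ^ k)⁻¹ * S.δ
      = (S.δ ^ k)⁻¹ * (s⁻¹ * S.δ) * S.δ ^ k := by group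
  rw [e]; exact gs_conj_zpow_mem k hs.2

lemma gs_prodSeg_self (A : ℕ → G) (r : ℕ) : prodSeg A r r = 1 := by
  simp [prodSeg]

lemma gs_prodSeg_cons (A : ℕ → G) {i r : ℕ} (h : i < r) :
    prodSeg A i r = A (i + 1) * prodSeg A (i + 1) r := by
  unfold prodSeg
  have h1 : r - i = (r - (i + 1)) + 1 := by omega
  rw [h1, List.range_succ_eq_map, List.map_cons, List.prod_cons, List.map_map]
  have hf : ((fun j => A (i + 1 + j)) ∘ Nat.succ) = (fun j => A (i + 1 + 1 + j)) := by
    funext j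
    simp only [Function.comp_apply]
    congr 1
    omega
  rw [hf]

lemma gs_prodSeg_mem (A : ℕ → G) (r : ℕ) (hA : ∀ j, 1 ≤ j → j ≤ r → A j ∈ S.M) :
    ∀ n i, i + n = r → prodSeg A i r ∈ S.M := by
  intro n
  induction n with
  | zero =>
    intro i h
    rw [show i = r by omega, gs_prodSeg_self]
    exact S.M.one_mem
  | succ m ih =>
    intro i h
    rw [gs_prodSeg_cons A (show i < r by omega)]
    exact mul_mem (hA (i + 1) (by omega) (by omega)) (ih (i + 1) (by omega))

lemma gs_nf_gcd {y : G} {k : ℤ} {r : ℕ} {B : ℕ → G}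
    (hnf : S.IsNormalForm y k r B) :
    ∀ n i, 1 ≤ i → i + n = r → S.gcd S.δ (prodSeg B (i - 1) r) = B i := by
  obtain ⟨-, hsimp, hlw⟩ := hnf
  intro n
  induction n with
  | zero =>
    intro i h1 h2
    have hir : i = r := by omega
    have hseg : prodSeg B (i - 1) r = B i * prodSeg B i r := by
      have h := gs_prodSeg_cons B (show i - 1 < r by omega)
      rwa [show i - 1 + 1 = i by omega] at h
    rw [hseg, show prodSeg B i r = 1 from by rw [hir]; exact gs_prodSeg_self B r, mul_one]
    refine gs_gcd_eq ?_ ?_ ?_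
    · exact (hsimp i h1 (by omega)).1.2
    · simpa using S.M.one_mem
    · exact fun x _ hx2 => hx2
  | succ m ih =>
    intro i h1 h2
    have hseg : prodSeg B (i - 1) r = B i * prodSeg B i r := by
      have h := gs_prodSeg_cons B (show i - 1 < r by omega)
      rwa [show i - 1 + 1 = i by omega] at h
    have hBi := (hsimp i h1 (by omega)).1
    have e1 : S.gcd S.δ (prodSeg B (i - 1) r)
        = B i * S.gcd ((B i)⁻¹ * S.δ) (prodSeg B i r) := by
      have h := gs_gcd_mul_left (S := S) (B i) ((B i)⁻¹ * S.δ) (prodSeg B i r)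
      rw [show B i * ((B i)⁻¹ * S.δ) = S.δ from by group] at h
      rw [hseg, ← h]
    have hIH : S.gcd S.δ (prodSeg B i r) = B (i + 1) := by
      have h := ih (i + 1) (by omega) (by omega)
      rwa [show i + 1 - 1 = i from rfl] at h
    have hc1 : (S.gcd ((B i)⁻¹ * S.δ) (prodSeg B i r))⁻¹ * ((B i)⁻¹ * S.δ) ∈ S.M :=
      S.gcd_dvd_left _ _
    have hc2 : (S.gcd ((B i)⁻¹ * S.δ) (prodSeg B i r))⁻¹ * prodSeg B i r ∈ S.M :=
      S.gcd_dvd_right _ _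
    have hcδ : (S.gcd ((B i)⁻¹ * S.δ) (prodSeg B i r))⁻¹ * S.δ ∈ S.M := by
      refine gs_dvd_trans hc1 ?_
      have e : ((B i)⁻¹ * S.δ)⁻¹ * S.δ = S.δ⁻¹ * B i * S.δ := by group
      rw [e]; exact gs_tau_mem hBi.1
    have hcB : (S.gcd ((B i)⁻¹ * S.δ) (prodSeg B i r))⁻¹ * B (i + 1) ∈ S.M := by
      rw [← hIH]; exact S.gcd_greatest _ _ _ hcδ hc2
    have hc3 := S.gcd_greatest _ _ _ hc1 hcB
    rw [hlw i h1 (by omega)] at hc3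
    have hcm : S.gcd ((B i)⁻¹ * S.δ) (prodSeg B i r) ∈ S.M :=
      gs_gcd_mem hBi.2
        (gs_prodSeg_mem B r (fun j hj1 hj2 => (hsimp j hj1 hj2).1.1) (m + 1) i h2)
    have hc_one : S.gcd ((B i)⁻¹ * S.δ) (prodSeg B i r) = 1 :=
      gs_units_eq_one _ hcm (by simpa using hc3)
    rw [e1, hc_one, mul_one]


/-- Pullback formula: with `b₀ = 1 ∨ τ⁻ᵏ(B₁)sδ⁻¹`, `b₁ = τᵏ(s)`,
`bᵢ = 1 ∨ Bᵢ⁻¹b_{i-1}` and `b = b₀ ∨ b_r`, the element `b` is simple and the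
`≼`-minimal simple `ρ_b` with `b ≼ ρ_b` and `y^{ρ_b} ∈ S_x` equals the
pullback `π_y(s)`: the `≼`-minimal simple `p` with `y^p ∈ S_x` and
`s ≼ φ_y(p)`. -/
theorem pullback_formula {G : Type*} [Group G] (S : Garside G)
    (x y s : G) (k : ℤ) (r : ℕ) (B : ℕ → G)
    (hr : 1 ≤ r) (hy : S.InUS x y) (hnf : S.IsNormalForm y k r B)
    (hs : S.Simple s)
    (bseq : ℕ → G)
    (hb1 : bseq 1 = S.tauPow k s)
    (hbi : ∀ i, 2 ≤ i → i ≤ r → bseq i = S.lcm 1 ((B i)⁻¹ * bseq (i - 1)))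
    (b₀ b : G)
    (hb0 : b₀ = S.lcm 1 (S.δ ^ k * B 1 * (S.δ ^ k)⁻¹ * s * S.δ⁻¹))
    (hb : b = S.lcm b₀ (bseq r)) :
    S.Simple b ∧
    ∀ ρ : G,
      (S.Simple ρ ∧ b⁻¹ * ρ ∈ S.M ∧ S.InSS x (ρ⁻¹ * y * ρ) ∧
        ∀ ρ' : G, S.Simple ρ' → b⁻¹ * ρ' ∈ S.M → S.InSS x (ρ'⁻¹ * y * ρ') →
          ρ⁻¹ * ρ' ∈ S.M) →
      (s⁻¹ * S.transp k y ρ ∈ S.M ∧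
        ∀ p : G, S.Simple p → S.InSS x (p⁻¹ * y * p) →
          s⁻¹ * S.transp k y p ∈ S.M → ρ⁻¹ * p ∈ S.M) := by
  have hBsimple := hnf.2.1
  have hy_eq := hnf.1
  have hy' : (S.δ ^ k)⁻¹ * y = prodSeg B 0 r := by rw [hy_eq]; group
  have hA1 : S.gcd S.δ ((S.δ ^ k)⁻¹ * y) = B 1 := by
    rw [hy']
    have h := gs_nf_gcd hnf (r - 1) 1 le_rfl (by omega)
    rwa [show (1 : ℕ) - 1 = 0 from rfl] at h
  -- simplicity of the bseq elements
  have hbseq : ∀ i, 1 ≤ i → i ≤ r → S.Simple (bseq i) := by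
    intro i
    induction i with
    | zero => intro h; exact absurd h (by omega)
    | succ n ih =>
      intro _ h2
      by_cases hn : n = 0
      · subst hn
        rw [hb1]
        exact gs_simple_conj_zpow k hs
      · have hprev := ih (by omega) (by omega)
        rw [hbi (n + 1) (by omega) h2, show n + 1 - 1 = n from rfl]
        constructor
        · have h := S.lcm_dvd_left 1 ((B (n + 1))⁻¹ * bseq n)
          simpa using h
        · refine S.lcm_least _ _ _ (by simpa using S.δ_mem) ?_
          have hstep : S.δ⁻¹ * (B (n + 1) * S.δ) ∈ S.M := by
            have e : S.δ⁻¹ * (B (n + 1) * S.δ) = S.δ⁻¹ * B (n + 1) * S.δ := by group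
            rw [e]; exact gs_tau_mem (hBsimple (n + 1) (by omega) h2).1.1
          have h1 : (bseq n)⁻¹ * (B (n + 1) * S.δ) ∈ S.M := gs_dvd_trans hprev.2 hstep
          have e : ((B (n + 1))⁻¹ * bseq n)⁻¹ * S.δ = (bseq n)⁻¹ * (B (n + 1) * S.δ) := by
            group
          rw [e]; exact h1
  -- b₀ is simple
  have hB1s := (hBsimple 1 le_rfl hr).1
  have hb0mem : b₀ ∈ S.M := by
    rw [hb0]
    have h := S.lcm_dvd_left 1 (S.δ ^ k * B 1 * (S.δ ^ k)⁻¹ * s * S.δ⁻¹)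
    simpa using h
  have hZδ : (S.δ ^ k * B 1 * (S.δ ^ k)⁻¹ * s * S.δ⁻¹)⁻¹ * S.δ ∈ S.M := by
    set T := (S.δ ^ (-k))⁻¹ * B 1 * S.δ ^ (-k) with hTdef
    have hT : S.Simple T := gs_simple_conj_zpow (-k) hB1s
    have hTs : (T * s)⁻¹ * (T * S.δ) ∈ S.M := by
      have e : (T * s)⁻¹ * (T * S.δ) = s⁻¹ * S.δ := by group
      rw [e]; exact hs.2
    have hT' : S.Simple ((S.δ ^ (1 : ℤ))⁻¹ * T * S.δ ^ (1 : ℤ)) := gs_simple_conj_zpow 1 hT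
    have hTδ : (T * S.δ)⁻¹ * (S.δ * S.δ) ∈ S.M := by
      have e : (T * S.δ)⁻¹ * (S.δ * S.δ)
          = ((S.δ ^ (1 : ℤ))⁻¹ * T * S.δ ^ (1 : ℤ))⁻¹ * S.δ := by group
      rw [e]; exact hT'.2
    have hX : (T * s)⁻¹ * (S.δ * S.δ) ∈ S.M := gs_dvd_trans hTs hTδ
    have h2 := gs_conj_zpow_mem (S := S) (-1) hX
    have e : (S.δ ^ (-1 : ℤ))⁻¹ * ((T * s)⁻¹ * (S.δ * S.δ)) * S.δ ^ (-1 : ℤ)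
        = (S.δ ^ k * B 1 * (S.δ ^ k)⁻¹ * s * S.δ⁻¹)⁻¹ * S.δ := by
      rw [hTdef]; group
    rwa [e] at h2
  have hb0δ : b₀⁻¹ * S.δ ∈ S.M := by
    rw [hb0]
    exact S.lcm_least _ _ _ (by simpa using S.δ_mem) hZδ
  have hbrs := hbseq r hr le_rfl
  have hbmem : b ∈ S.M := by
    have h1 : b₀⁻¹ * b ∈ S.M := by rw [hb]; exact S.lcm_dvd_left _ _
    have e : b = b₀ * (b₀⁻¹ * b) := by group
    rw [e]; exact mul_mem hb0mem h1
  have hbδ : b⁻¹ * S.δ ∈ S.M := by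
    rw [hb]; exact S.lcm_least _ _ _ hb0δ hbrs.2
  -- main inductive equivalence for the bseq part
  have hpsm : ∀ j, 1 ≤ j → j ≤ r → B j ∈ S.M := fun j h1 h2 => (hBsimple j h1 h2).1.1
  have claimB_aux : ∀ p, p ∈ S.M → ∀ n i, 1 ≤ i → i + n = r →
      ((bseq i)⁻¹ * (prodSeg B i r * p) ∈ S.M ↔ (bseq r)⁻¹ * p ∈ S.M) := by
    intro p hp n
    induction n with
    | zero =>
      intro i h1 h2
      rw [show i = r by omega, gs_prodSeg_self, one_mul]
    | succ m ih =>
      intro i h1 h2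
      have hq : prodSeg B (i + 1) r * p ∈ S.M :=
        mul_mem (gs_prodSeg_mem B r hpsm m (i + 1) (by omega)) hp
      have e0 : prodSeg B i r = B (i + 1) * prodSeg B (i + 1) r :=
        gs_prodSeg_cons B (by omega)
      have step : (bseq i)⁻¹ * (prodSeg B i r * p) ∈ S.M
          ↔ (bseq (i + 1))⁻¹ * (prodSeg B (i + 1) r * p) ∈ S.M := by
        rw [hbi (i + 1) (by omega) (by omega), show i + 1 - 1 = i from rfl]
        have e : ((B (i + 1))⁻¹ * bseq i)⁻¹ * (prodSeg B (i + 1) r * p)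
            = (bseq i)⁻¹ * (prodSeg B i r * p) := by
          rw [e0]; group
        constructor
        · intro h
          rw [gs_lcm_le_iff]
          exact ⟨by simpa using hq, by rw [e]; exact h⟩
        · intro h
          rw [gs_lcm_le_iff] at h
          rw [← e]
          exact h.2
      exact step.trans (ih (i + 1) (by omega) (by omega))
  -- the key equivalence: s ≼ φ_y(p) ↔ b ≼ p
  have key : ∀ p, p ∈ S.M → (s⁻¹ * S.transp k y p ∈ S.M ↔ b⁻¹ * p ∈ S.M) := by
    intro p hp
    have e1 : (B 1 * S.tauPow k s)⁻¹ *
          (S.tauPow k p * S.gcd S.δ ((S.δ ^ k)⁻¹ * (p⁻¹ * y * p)))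
        = (S.δ ^ k)⁻¹ * (s⁻¹ * S.transp k y p) * S.δ ^ k := by
      simp only [Garside.transp]
      rw [hA1]
      simp only [Garside.tauPow]
      group
    have step1 : s⁻¹ * S.transp k y p ∈ S.M
        ↔ (B 1 * S.tauPow k s)⁻¹ *
            (S.tauPow k p * S.gcd S.δ ((S.δ ^ k)⁻¹ * (p⁻¹ * y * p))) ∈ S.M := by
      rw [e1, gs_conj_zpow_mem_iff]
    have e2 : S.tauPow k p * S.gcd S.δ ((S.δ ^ k)⁻¹ * (p⁻¹ * y * p))
        = S.gcd (S.tauPow k p * S.δ) ((S.δ ^ k)⁻¹ * (y * p)) := by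
      have h := gs_gcd_mul_left (S := S) (S.tauPow k p) S.δ ((S.δ ^ k)⁻¹ * (p⁻¹ * y * p))
      rw [show S.tauPow k p * ((S.δ ^ k)⁻¹ * (p⁻¹ * y * p)) = (S.δ ^ k)⁻¹ * (y * p) from by
        simp only [Garside.tauPow]; group] at h
      exact h.symm
    have claimA : (B 1 * S.tauPow k s)⁻¹ * (S.tauPow k p * S.δ) ∈ S.M
        ↔ b₀⁻¹ * p ∈ S.M := by
      have e : (B 1 * S.tauPow k s)⁻¹ * (S.tauPow k p * S.δ)
          = (S.δ ^ (k + 1))⁻¹ *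
              ((S.δ ^ k * B 1 * (S.δ ^ k)⁻¹ * s * S.δ⁻¹)⁻¹ * p) * S.δ ^ (k + 1) := by
        simp only [Garside.tauPow]
        group
      rw [e, gs_conj_zpow_mem_iff, hb0]
      constructor
      · intro h
        rw [gs_lcm_le_iff]
        exact ⟨by simpa using hp, h⟩
      · intro h
        rw [gs_lcm_le_iff] at h
        exact h.2
    have claimB : (B 1 * S.tauPow k s)⁻¹ * ((S.δ ^ k)⁻¹ * (y * p)) ∈ S.M
        ↔ (bseq r)⁻¹ * p ∈ S.M := by
      have e : (B 1 * S.tauPow k s)⁻¹ * ((S.δ ^ k)⁻¹ * (y * p))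
          = (bseq 1)⁻¹ * (prodSeg B 1 r * p) := by
        rw [hy_eq, hb1, gs_prodSeg_cons B (show (0 : ℕ) < r by omega)]
        simp only [Nat.zero_add, Garside.tauPow]
        group
      rw [e]
      exact claimB_aux p hp (r - 1) 1 le_rfl (by omega)
    rw [step1, e2, hb, gs_le_gcd_iff, gs_lcm_le_iff, claimA, claimB]
  refine ⟨⟨hbmem, hbδ⟩, ?_⟩
  rintro ρ ⟨hρs, hbρ, hρss, hρmin⟩
  refine ⟨(key ρ hρs.1).2 hbρ, ?_⟩
  intro p hps hpss hsφ
  exact hρmin p hps ((key p hps.1).1 hsφ) hpss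


end GarsideFormal
end
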